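/- arXiv:1311.4374 — 7 statements merged into one kernel-verified Lean document; each statement's English description precedes it below -/
import Mathlib

section
/- Let D be a unital complex C*-algebra and let C₁, C₂ ∈ D be such that, for i = 1, 2, Aᵢ := Cᵢ*Cᵢ and Bᵢ := CᵢCᵢ* are projections with Aᵢ + Bᵢ = 1. Let P and Q be projections in D and let X ∈ D satisfy X*X = P and XX* = Q. Assume C₁ commutes with each of X, X*, P, Q, and C₂ commutes with each of X, X*, P, Q, C₁, C₁*. Then there exists a unitary U of D, connected to 1 by a continuous path within the unitary group of D, such that U(A₂A₁P)U* = A₂A₁Q. -/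
/-- Two elements of an algebra with star and topology are connected by a continuous
path within the unitary group. -/
def UnitaryPath {D : Type*} [Monoid D] [StarMul D] [TopologicalSpace D] (u v : D) : Prop :=
  ∃ f : ℝ → D, ContinuousOn f (Set.Icc 0 1) ∧ (∀ t ∈ Set.Icc (0 : ℝ) 1, f t ∈ unitary D) ∧
    f 0 = u ∧ f 1 = v

/-!
Write `A = C*C`, `B = CC*` for a matrix unit `C` (`C² = 0`, `A + B = 1`): these split `D` into
`2 × 2` matrices over a corner, on which everything commuting with `C` and `C*` acts diagonally.

First level. `y = C₁*X` is a partial isometry from `B₁P` onto `A₁Q` with `y² = 0`, so the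
symmetry `1 - z² + z`, `z = y + y*`, exchanges `y*y` and `yy*`; the same symmetry built from `C₁`
itself, which is `C₁ + C₁*`, exchanges `A₁` and `B₁`. Their product `w` is a unitary commuting
with `C₂` and `C₂*` that conjugates `A₁P` to `A₁Q`.

Second level (Whitehead's trick). `U = A₂w + B₂w*`, i.e. `w ⊕ w*`, agrees with `w` on the range
of `A₂`, and `U = VJV*J*` with `V = A₂w + B₂` and `J = C₂ - C₂*`. Since `J* = -J` and `J² = -1`,
`cos t + sin t • J` is a path of unitaries from `1` to `J`, which yields a path from `1` to `U`.
-/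

def IsPartialIsometry {R : Type*} [Mul R] [Star R] (y : R) : Prop := y * star y * y = y

lemma one_sub_sq_add_mul_self {R : Type*} [Ring R] {z : R} (hz : z ^ 3 = z) :
    (1 - z ^ 2 + z) * (1 - z ^ 2 + z) = 1 := by
  have key : (1 - z ^ 2 + z) * (1 - z ^ 2 + z) = 1 + (z ^ 3 - z) * (z - 2) := by noncomm_ring
  rw [key, hz, sub_self, zero_mul, add_zero]

section StarRing

variable {R : Type*} [Ring R] [StarRing R]

lemma IsPartialIsometry.star_mul_self_mul_star {y : R} (hy : IsPartialIsometry y) :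
    star y * y * star y = star y := by
  simpa [mul_assoc] using congrArg star (hy : y * star y * y = y)

lemma IsSelfAdjoint.mem_unitary_of_mul_self {s : R} (hs : IsSelfAdjoint s) (h : s * s = 1) :
    s ∈ unitary R :=
  Unitary.mem_iff.mpr ⟨by rw [hs.star_eq, h], by rw [hs.star_eq, h]⟩

lemma Commute.star_right_of_mem_unitary {a u : R} (h : Commute a u) (hu : u ∈ unitary R) :
    Commute a (star u) := by
  calc a * star u = star u * (u * a) * star u := by
        rw [← mul_assoc, Unitary.star_mul_self_of_mem hu, one_mul]
    _ = star u * a * (u * star u) := by rw [← h.eq]; simp only [mul_assoc]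
    _ = star u * a := by rw [Unitary.mul_star_self_of_mem hu, mul_one]

lemma Commute.star_mul_self_left {a b : R} (h : Commute a b) (hb : IsSelfAdjoint b) :
    Commute (star a * a) b :=
  (commute_star_comm.mpr (hb.star_eq.symm ▸ h)).mul_left h

section PartialIsometrySymm

/- When `y² = 0`, `z = y + y*` is a self-adjoint partial isometry with support projection
`z² = y*y + yy*`; the symmetry is `z` on that support and `1` off it. -/
def partialIsometrySymm (y : R) : R := 1 - (y + star y) ^ 2 + (y + star y)

variable {y : R}

lemma isSelfAdjoint_partialIsometrySymm (y : R) : IsSelfAdjoint (partialIsometrySymm y) := by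
  simp [IsSelfAdjoint, partialIsometrySymm, add_comm]

lemma Commute.partialIsometrySymm_right {a : R} (h : Commute a y) (h' : Commute a (star y)) :
    Commute a (partialIsometrySymm y) := by
  have hz := h.add_right h'
  exact ((Commute.one_right a).sub_right (hz.pow_right 2)).add_right hz

lemma add_star_mul_self_of_mul_self_eq_zero (hy0 : y * y = 0) :
    (y + star y) * y = star y * y := by
  rw [add_mul, hy0, zero_add]

lemma add_star_mul_star_of_mul_self_eq_zero (hy0 : y * y = 0) :
    (y + star y) * star y = y * star y := by
  rw [add_mul, ← star_mul, hy0, star_zero, add_zero]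

lemma add_star_sq_mul_star (hy : IsPartialIsometry y) (hy0 : y * y = 0) :
    (y + star y) ^ 2 * star y = star y := by
  rw [sq, mul_assoc, add_star_mul_star_of_mul_self_eq_zero hy0, ← mul_assoc,
    add_star_mul_self_of_mul_self_eq_zero hy0, hy.star_mul_self_mul_star]

lemma add_star_pow_three (hy : IsPartialIsometry y) (hy0 : y * y = 0) :
    (y + star y) ^ 3 = y + star y := by
  rw [pow_succ, mul_add, add_star_sq_mul_star hy hy0, sq, mul_assoc,
    add_star_mul_self_of_mul_self_eq_zero hy0, ← mul_assoc,
    add_star_mul_star_of_mul_self_eq_zero hy0, hy]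

lemma partialIsometrySymm_mem_unitary (hy : IsPartialIsometry y) (hy0 : y * y = 0) :
    partialIsometrySymm y ∈ unitary R :=
  (isSelfAdjoint_partialIsometrySymm y).mem_unitary_of_mul_self
    (one_sub_sq_add_mul_self (add_star_pow_three hy hy0))

lemma partialIsometrySymm_mul_star (hy : IsPartialIsometry y) (hy0 : y * y = 0) :
    partialIsometrySymm y * star y = y * star y := by
  rw [partialIsometrySymm, add_mul, sub_mul, one_mul, add_star_sq_mul_star hy hy0,
    add_star_mul_star_of_mul_self_eq_zero hy0, sub_self, zero_add]

lemma partialIsometrySymm_conj (hy : IsPartialIsometry y) (hy0 : y * y = 0) :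
    partialIsometrySymm y * (star y * y) * partialIsometrySymm y = y * star y := by
  have hr := partialIsometrySymm_mul_star hy hy0
  have hr' : y * partialIsometrySymm y = y * star y := by
    simpa [(isSelfAdjoint_partialIsometrySymm y).star_eq] using congrArg star hr
  rw [← mul_assoc, hr, hy, hr']

end PartialIsometrySymm

section MatrixUnit

variable {C : R}

lemma star_mul_star_of_mul_self_eq_zero (hC0 : C * C = 0) : star C * star C = 0 := by
  rw [← star_mul, hC0, star_zero]

lemma star_mul_self_mul_mul_star_self (hC0 : C * C = 0) : star C * C * (C * star C) = 0 := by
  rw [← mul_assoc, mul_assoc _ C C, hC0, mul_zero, zero_mul]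

lemma mul_star_self_mul_star_mul_self (hC0 : C * C = 0) : C * star C * (star C * C) = 0 := by
  rw [mul_assoc, ← mul_assoc (star C), star_mul_star_of_mul_self_eq_zero hC0, zero_mul, mul_zero]

lemma isPartialIsometry_of_mul_self_eq_zero (hC0 : C * C = 0)
    (hsum : star C * C + C * star C = 1) : IsPartialIsometry C :=
  calc C * star C * C = C * (star C * C + C * star C) := by
        rw [mul_add, ← mul_assoc C C, hC0, zero_mul, add_zero, mul_assoc]
    _ = C := by rw [hsum, mul_one]

lemma isIdempotentElem_star_mul_self_of_mul_self_eq_zero (hC0 : C * C = 0)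
    (hsum : star C * C + C * star C = 1) : IsIdempotentElem (star C * C) := by
  rw [IsIdempotentElem, ← mul_assoc,
    (isPartialIsometry_of_mul_self_eq_zero hC0 hsum).star_mul_self_mul_star]

lemma isIdempotentElem_mul_star_self_of_mul_self_eq_zero (hC0 : C * C = 0)
    (hsum : star C * C + C * star C = 1) : IsIdempotentElem (C * star C) := by
  rw [IsIdempotentElem, ← mul_assoc, isPartialIsometry_of_mul_self_eq_zero hC0 hsum]

lemma sub_star_mul_self (hC0 : C * C = 0) (hsum : star C * C + C * star C = 1) :
    (C - star C) * (C - star C) = -1 := by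
  rw [sub_mul, mul_sub, mul_sub, hC0, star_mul_star_of_mul_self_eq_zero hC0, ← hsum]
  abel

lemma sub_star_mul_star_sub_star (hC0 : C * C = 0) (hsum : star C * C + C * star C = 1) :
    (C - star C) * star (C - star C) = 1 := by
  rw [star_sub, star_star, ← neg_sub C (star C), mul_neg, sub_star_mul_self hC0 hsum, neg_neg]

lemma sub_star_mul_star_mul_self (hC0 : C * C = 0) (hsum : star C * C + C * star C = 1) :
    (C - star C) * (star C * C) = C * star C * (C - star C) := by
  rw [sub_mul, mul_sub, ← mul_assoc, isPartialIsometry_of_mul_self_eq_zero hC0 hsum, ← mul_assoc,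
    star_mul_star_of_mul_self_eq_zero hC0, mul_assoc, star_mul_star_of_mul_self_eq_zero hC0,
    zero_mul, mul_zero]

lemma sub_star_mul_mul_star_self (hC0 : C * C = 0) (hsum : star C * C + C * star C = 1) :
    (C - star C) * (C * star C) = star C * C * (C - star C) := by
  rw [sub_mul, mul_sub, ← mul_assoc, hC0, ← mul_assoc,
    (isPartialIsometry_of_mul_self_eq_zero hC0 hsum).star_mul_self_mul_star,
    mul_assoc, hC0, zero_mul, mul_zero]

lemma sub_star_conj_mul_star_mul_self_add_mul_star_self (hC0 : C * C = 0)
    (hsum : star C * C + C * star C = 1) {x : R} (hx : Commute (C - star C) x) :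
    (C - star C) * (x * (star C * C) + C * star C) * star (C - star C) =
      x * (C * star C) + star C * C :=
  calc (C - star C) * (x * (star C * C) + C * star C) * star (C - star C)
      = (x * ((C - star C) * (star C * C)) + (C - star C) * (C * star C)) *
          star (C - star C) := by rw [mul_add, ← mul_assoc, hx.eq, mul_assoc]
    _ = (x * (C * star C) + star C * C) * ((C - star C) * star (C - star C)) := by
      rw [sub_star_mul_star_mul_self hC0 hsum, sub_star_mul_mul_star_self hC0 hsum,
        ← mul_assoc, ← add_mul, mul_assoc]
    _ = x * (C * star C) + star C * C := by
      rw [sub_star_mul_star_sub_star hC0 hsum, mul_one]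

end MatrixUnit

section CornerUnitary

def cornerUnitary (C w : R) : R := star C * C * w + C * star C * star w

variable {C w : R}

lemma star_star_mul_self_mul_add_mul_star_self :
    star (star C * C * w + C * star C) = star w * (star C * C) + C * star C := by
  simp only [star_add, star_mul, star_star, mul_assoc]

lemma star_mul_self_mul_add_mul_star_self_mem_unitary (hC0 : C * C = 0)
    (hsum : star C * C + C * star C = 1) (hw : w ∈ unitary R) (hCw : Commute C w) :
    star C * C * w + C * star C ∈ unitary R := by
  have hCsw : Commute (star C) w := commute_star_comm.mpr (hCw.star_right_of_mem_unitary hw)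
  have hAw : Commute (star C * C) w := hCsw.mul_left hCw
  have hBw : Commute (C * star C) w := hCw.mul_left hCsw
  have hA := isIdempotentElem_star_mul_self_of_mul_self_eq_zero hC0 hsum
  have hB := isIdempotentElem_mul_star_self_of_mul_self_eq_zero hC0 hsum
  have hAB := star_mul_self_mul_mul_star_self hC0
  have hBA := mul_star_self_mul_star_mul_self hC0
  have hww := Unitary.star_mul_self_of_mem hw
  have hww' := Unitary.mul_star_self_of_mem hw
  rw [Unitary.mem_iff, star_star_mul_self_mul_add_mul_star_self]
  constructor
  · have h1 : star w * (star C * C) * (star C * C * w) = star C * C := by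
      rw [mul_assoc, ← mul_assoc (star C * C), hA.eq, hAw.eq, ← mul_assoc, hww, one_mul]
    have h2 : star w * (star C * C) * (C * star C) = 0 := by rw [mul_assoc, hAB, mul_zero]
    have h3 : C * star C * (star C * C * w) = 0 := by rw [← mul_assoc, hBA, zero_mul]
    rw [add_mul, mul_add, mul_add, h1, h2, h3, hB.eq, add_zero, zero_add, hsum]
  · have h1 : star C * C * w * (star w * (star C * C)) = star C * C := by
      rw [mul_assoc, ← mul_assoc w, hww', one_mul, hA.eq]
    have h2 : star C * C * w * (C * star C) = 0 := by
      rw [hAw.eq, mul_assoc, hAB, mul_zero]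
    have h3 : C * star C * (star w * (star C * C)) = 0 := by
      rw [← mul_assoc, (hBw.star_right_of_mem_unitary hw).eq, mul_assoc, hBA, mul_zero]
    rw [add_mul, mul_add, mul_add, h1, h2, h3, hB.eq, add_zero, zero_add, hsum]

lemma cornerUnitary_eq_commutator (hC0 : C * C = 0) (hsum : star C * C + C * star C = 1)
    (hw : w ∈ unitary R) (hCw : Commute C w) :
    (star C * C * w + C * star C) * (C - star C) * star (star C * C * w + C * star C) *
      star (C - star C) = cornerUnitary C w := by
  have hCws : Commute C (star w) := hCw.star_right_of_mem_unitary hw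
  have hAw : Commute (star C * C) w := (commute_star_comm.mpr hCws).mul_left hCw
  have hBws : Commute (C * star C) (star w) := hCws.mul_left hCw.star_star
  have h1 : star C * C * w * (star w * (C * star C)) = 0 := by
    rw [mul_assoc, ← mul_assoc w, Unitary.mul_star_self_of_mem hw, one_mul,
      star_mul_self_mul_mul_star_self hC0]
  have h2 : star C * C * w * (star C * C) = star C * C * w := by
    rw [mul_assoc, ← hAw.eq, ← mul_assoc,
      (isIdempotentElem_star_mul_self_of_mul_self_eq_zero hC0 hsum).eq]
  have h3 : C * star C * (star w * (C * star C)) = C * star C * star w := by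
    rw [← hBws.eq, ← mul_assoc, (isIdempotentElem_mul_star_self_of_mul_self_eq_zero hC0 hsum).eq]
  rw [mul_assoc, mul_assoc, ← mul_assoc (C - star C), star_star_mul_self_mul_add_mul_star_self,
    sub_star_conj_mul_star_mul_self_add_mul_star_self hC0 hsum (hCws.sub_left hCw.star_star),
    cornerUnitary, add_mul, mul_add, mul_add, h1, h2, h3, mul_star_self_mul_star_mul_self hC0,
    zero_add, add_zero]

lemma cornerUnitary_mul_star_mul_self (hC0 : C * C = 0) (hsum : star C * C + C * star C = 1)
    (hw : w ∈ unitary R) (hCw : Commute C w) :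
    cornerUnitary C w * (star C * C) = w * (star C * C) := by
  have hCsw : Commute (star C) w := commute_star_comm.mpr (hCw.star_right_of_mem_unitary hw)
  have hAw : Commute (star C * C) w := hCsw.mul_left hCw
  have hBws : Commute (C * star C) (star w) := (hCw.mul_left hCsw).star_right_of_mem_unitary hw
  rw [cornerUnitary, add_mul, mul_assoc, ← hAw.eq, ← mul_assoc,
    (isIdempotentElem_star_mul_self_of_mul_self_eq_zero hC0 hsum).eq, hAw.eq, hBws.eq, mul_assoc,
    mul_star_self_mul_star_mul_self hC0, mul_zero, add_zero]

lemma cornerUnitary_conj (hC0 : C * C = 0) (hsum : star C * C + C * star C = 1)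
    (hw : w ∈ unitary R) (hCw : Commute C w) {y : R} (hy : Commute (star C * C) y) :
    cornerUnitary C w * (star C * C * y) * star (cornerUnitary C w) =
      w * (star C * C * y) * star w := by
  have hUA := cornerUnitary_mul_star_mul_self hC0 hsum hw hCw
  have hAU : star C * C * star (cornerUnitary C w) = star C * C * star w := by
    simpa [mul_assoc] using congrArg star hUA
  have hAy : star C * C * y = star C * C * y * (star C * C) := by
    rw [mul_assoc (star C * C) y, ← hy.eq, ← mul_assoc,
      (isIdempotentElem_star_mul_self_of_mul_self_eq_zero hC0 hsum).eq]
  calc cornerUnitary C w * (star C * C * y) * star (cornerUnitary C w)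
      = cornerUnitary C w * (star C * C) * y * (star C * C * star (cornerUnitary C w)) := by
        rw [hAy]; simp only [mul_assoc]
    _ = w * (star C * C) * y * (star C * C * star w) := by rw [hUA, hAU]
    _ = w * (star C * C * y) * star w := by rw [hAy]; simp only [mul_assoc]

end CornerUnitary

section Flip

-- For `X = diag(x, x)` in the matrix picture given by `C`, this is `[[x*, 1 - x*x], [1 - xx*, x]]`.
def flipUnitary (C X : R) : R := partialIsometrySymm (star C * X) * partialIsometrySymm C

variable {C X : R}

lemma Commute.flipUnitary_right {a : R} (haC : Commute a C) (haCs : Commute a (star C))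
    (haX : Commute a X) (haXs : Commute a (star X)) : Commute a (flipUnitary C X) := by
  have hay : Commute a (star (star C * X)) := by
    rw [star_mul, _root_.star_star]
    exact haXs.mul_right haC
  exact ((haCs.mul_right haX).partialIsometrySymm_right hay).mul_right
    (haC.partialIsometrySymm_right haCs)

lemma star_star_mul_mul_star_mul (hCX : Commute C X) (hCXs : Commute C (star X)) :
    star (star C * X) * (star C * X) = C * star C * (star X * X) := by
  have hBXs : Commute (C * star C) (star X) := hCXs.mul_left hCX.star_star
  rw [star_mul, star_star, mul_assoc, ← mul_assoc C, ← mul_assoc, ← hBXs.eq, mul_assoc]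

lemma star_mul_mul_star_star_mul (hCX : Commute C X) (hCXs : Commute C (star X)) :
    star C * X * star (star C * X) = star C * C * (X * star X) := by
  rw [star_mul, star_star, mul_assoc, ← mul_assoc X, ← (hCX.mul_right hCXs).eq, ← mul_assoc]

lemma isPartialIsometry_star_mul (hC : IsPartialIsometry C) (hX : IsPartialIsometry X)
    (hCX : Commute C X) (hCXs : Commute C (star X)) : IsPartialIsometry (star C * X) := by
  have hQCs : Commute (X * star X) (star C) :=
    ((commute_star_comm.mpr hCXs).mul_right hCX.star_star).symm
  calc star C * X * star (star C * X) * (star C * X)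
      = star C * C * ((X * star X) * star C) * X := by
        rw [star_mul_mul_star_star_mul hCX hCXs]; simp only [mul_assoc]
    _ = star C * C * star C * (X * star X * X) := by rw [hQCs.eq]; simp only [mul_assoc]
    _ = star C * X := by rw [hC.star_mul_self_mul_star, hX]

lemma star_mul_mul_star_mul_eq_zero (hC0 : C * C = 0) (hCXs : Commute C (star X)) :
    star C * X * (star C * X) = 0 := by
  rw [mul_assoc, ← mul_assoc X, ← (commute_star_comm.mpr hCXs).eq, ← mul_assoc, ← mul_assoc,
    star_mul_star_of_mul_self_eq_zero hC0, zero_mul, zero_mul]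

lemma flipUnitary_mem_unitary (hC0 : C * C = 0) (hsum : star C * C + C * star C = 1)
    (hX : IsPartialIsometry X) (hCX : Commute C X) (hCXs : Commute C (star X)) :
    flipUnitary C X ∈ unitary R := by
  have hC := isPartialIsometry_of_mul_self_eq_zero hC0 hsum
  exact mul_mem
    (partialIsometrySymm_mem_unitary (isPartialIsometry_star_mul hC hX hCX hCXs)
      (star_mul_mul_star_mul_eq_zero hC0 hCXs))
    (partialIsometrySymm_mem_unitary hC hC0)

lemma flipUnitary_conj (hC0 : C * C = 0) (hsum : star C * C + C * star C = 1)
    (hX : IsPartialIsometry X) (hCX : Commute C X) (hCXs : Commute C (star X)) :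
    flipUnitary C X * (star C * C * (star X * X)) * star (flipUnitary C X) =
      star C * C * (X * star X) := by
  have hC := isPartialIsometry_of_mul_self_eq_zero hC0 hsum
  have hsP : Commute (partialIsometrySymm C) (star X * X) :=
    (Commute.partialIsometrySymm_right (hCXs.mul_right hCX).symm
      (hCX.star_star.mul_right (commute_star_comm.mpr hCXs)).symm).symm
  rw [flipUnitary, star_mul, (isSelfAdjoint_partialIsometrySymm C).star_eq,
    (isSelfAdjoint_partialIsometrySymm (star C * X)).star_eq]
  set r := partialIsometrySymm (star C * X)
  set s := partialIsometrySymm C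
  calc r * s * (star C * C * (star X * X)) * (s * r)
      = r * (s * (star C * C) * s * (star X * X)) * r := by
        rw [mul_assoc (s * (star C * C)) s, hsP.eq]; simp only [mul_assoc]
    _ = r * (star (star C * X) * (star C * X)) * r := by
        rw [partialIsometrySymm_conj hC hC0, star_star_mul_mul_star_mul hCX hCXs]
    _ = star C * C * (X * star X) := by
        rw [partialIsometrySymm_conj (isPartialIsometry_star_mul hC hX hCX hCXs)
          (star_mul_mul_star_mul_eq_zero hC0 hCXs), star_mul_mul_star_star_mul hCX hCXs]

end Flip

end StarRing

lemma isPartialIsometry_of_isIdempotentElem {E : Type*} [NonUnitalNormedRing E] [StarRing E]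
    [CStarRing E] {x : E} (h : IsIdempotentElem (star x * x)) : IsPartialIsometry x := by
  have key : star (x * star x * x - x) * (x * star x * x - x) =
      star x * x * (star x * x) * (star x * x) - star x * x * (star x * x)
        - star x * x * (star x * x) + star x * x := by
    simp only [star_sub, star_mul, star_star]
    noncomm_ring
  simp only [h.eq, sub_self, zero_sub, neg_add_cancel] at key
  exact sub_eq_zero.mp (CStarRing.star_mul_self_eq_zero_iff _ |>.mp key)

lemma mul_self_eq_zero_of_isIdempotentElem {E : Type*} [NormedRing E] [StarRing E] [CStarRing E]
    {x : E} (h : IsIdempotentElem (star x * x)) (hsum : star x * x + x * star x = 1) :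
    x * x = 0 := by
  have hx := isPartialIsometry_of_isIdempotentElem h
  calc x * x = x * star x * x * (x * star x * x) := by rw [hx]
    _ = x * (star x * x * (x * star x)) * x := by simp only [mul_assoc]
    _ = 0 := by rw [eq_sub_of_add_eq' hsum, mul_sub, mul_one, h.eq, sub_self, mul_zero, zero_mul]

section UnitaryPath

variable {D : Type*} [Monoid D] [StarMul D] [TopologicalSpace D]

lemma UnitaryPath.mem_unitary {u : D} (h : UnitaryPath 1 u) : u ∈ unitary D := by
  obtain ⟨f, -, hfu, -, hf1⟩ := h
  exact hf1 ▸ hfu 1 ⟨zero_le_one, le_rfl⟩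

lemma UnitaryPath.commutator [ContinuousMul D] [ContinuousStar D] {u v : D}
    (hv : v ∈ unitary D) (hu : UnitaryPath 1 u) : UnitaryPath 1 (v * u * star v * star u) := by
  obtain ⟨f, hfc, hfu, hf0, hf1⟩ := hu
  refine ⟨fun t ↦ v * f t * star v * star (f t), ?_, fun t ht ↦ ?_, ?_, by simp only [hf1]⟩
  · exact ((continuousOn_const.mul hfc).mul continuousOn_const).mul hfc.star
  · have := hfu t ht
    exact mul_mem (mul_mem (mul_mem hv this) (Unitary.star_mem hv)) (Unitary.star_mem this)
  · simp [hf0, Unitary.mul_star_self_of_mem hv]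

end UnitaryPath

section Rotation

variable {D : Type*} [Ring D] [StarRing D] [Algebra ℂ D] [StarModule ℂ D]

lemma ofReal_smul_one_add_ofReal_smul_mem_unitary {J : D} (hJs : star J = -J) (hJJ : J * J = -1)
    {a b : ℝ} (hab : a ^ 2 + b ^ 2 = 1) : (a : ℂ) • (1 : D) + (b : ℂ) • J ∈ unitary D := by
  have hab' : (a : ℂ) * a + b * b = 1 := by exact_mod_cast (by rw [← hab]; ring : a * a + b * b = 1)
  simp only [Unitary.mem_iff, star_add, star_smul, Complex.star_def, Complex.conj_ofReal, star_one,
    hJs]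
  constructor
  · simp only [add_mul, mul_add, smul_mul_smul_comm, one_mul, mul_one, neg_mul, hJJ]
    linear_combination (norm := module) hab' • (1 : D)
  · simp only [add_mul, mul_add, smul_mul_smul_comm, one_mul, mul_one, mul_neg, hJJ]
    linear_combination (norm := module) hab' • (1 : D)

variable [TopologicalSpace D] [IsTopologicalRing D] [ContinuousSMul ℂ D]

lemma unitaryPath_one_of_star_eq_neg {J : D} (hJs : star J = -J) (hJJ : J * J = -1) :
    UnitaryPath 1 J := by
  refine ⟨fun t ↦ (Real.cos (Real.pi / 2 * t) : ℂ) • (1 : D) + (Real.sin (Real.pi / 2 * t) : ℂ) • J,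
    by fun_prop, fun t _ ↦ ?_, by simp, by simp⟩
  exact ofReal_smul_one_add_ofReal_smul_mem_unitary hJs hJJ
    (by rw [add_comm]; exact Real.sin_sq_add_cos_sq _)

lemma unitaryPath_one_cornerUnitary [ContinuousStar D] {C w : D} (hC0 : C * C = 0)
    (hsum : star C * C + C * star C = 1) (hw : w ∈ unitary D) (hCw : Commute C w) :
    UnitaryPath 1 (cornerUnitary C w) := by
  rw [← cornerUnitary_eq_commutator hC0 hsum hw hCw]
  exact (unitaryPath_one_of_star_eq_neg (by rw [star_sub, star_star, neg_sub])
    (sub_star_mul_self hC0 hsum)).commutator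
    (star_mul_self_mul_add_mul_star_self_mem_unitary hC0 hsum hw hCw)

end Rotation

theorem stmt_2_general {D : Type*} [CStarAlgebra D] (C₁ C₂ A₁ B₁ A₂ B₂ : D)
    (hA₁ : A₁ = star C₁ * C₁) (hB₁ : B₁ = C₁ * star C₁)
    (hA₂ : A₂ = star C₂ * C₂) (hB₂ : B₂ = C₂ * star C₂)
    (hA₁idem : A₁ * A₁ = A₁) (hA₂idem : A₂ * A₂ = A₂)
    (hsum₁ : A₁ + B₁ = 1) (hsum₂ : A₂ + B₂ = 1)
    (P Q X : D)
    (hP : star P = P ∧ P * P = P)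
    (hXP : star X * X = P) (hXQ : X * star X = Q)
    (hC₁X : Commute C₁ X) (hC₁Xs : Commute C₁ (star X))
    (hC₂X : Commute C₂ X) (hC₂Xs : Commute C₂ (star X))
    (hC₂C₁ : Commute C₂ C₁) (hC₂C₁s : Commute C₂ (star C₁)) :
    ∃ U : D, U ∈ unitary D ∧ UnitaryPath (1 : D) U ∧
      U * (A₂ * A₁ * P) * star U = A₂ * A₁ * Q := by
  subst hA₁ hB₁ hA₂ hB₂ hXP hXQ
  have hC₁0 := mul_self_eq_zero_of_isIdempotentElem hA₁idem hsum₁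
  have hC₂0 := mul_self_eq_zero_of_isIdempotentElem hA₂idem hsum₂
  have hX := isPartialIsometry_of_isIdempotentElem hP.2
  have hw := flipUnitary_mem_unitary hC₁0 hsum₁ hX hC₁X hC₁Xs
  have hC₂w := hC₂C₁.flipUnitary_right hC₂C₁s hC₂X hC₂Xs
  have hA₂w : Commute (star C₂ * C₂) (flipUnitary C₁ X) :=
    (commute_star_comm.mpr (hC₂w.star_right_of_mem_unitary hw)).mul_left hC₂w
  have hA₁P : IsSelfAdjoint (star C₁ * C₁ * (star X * X)) :=
    (IsSelfAdjoint.star_mul_self C₁).commute_iff (IsSelfAdjoint.star_mul_self X) |>.mp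
      ((hC₁Xs.mul_right hC₁X).star_mul_self_left (IsSelfAdjoint.star_mul_self X))
  have hA₂A₁P : Commute (star C₂ * C₂) (star C₁ * C₁ * (star X * X)) :=
    ((hC₂C₁s.mul_right hC₂C₁).mul_right (hC₂Xs.mul_right hC₂X)).star_mul_self_left hA₁P
  have hU := unitaryPath_one_cornerUnitary hC₂0 hsum₂ hw hC₂w
  refine ⟨_, hU.mem_unitary, hU, ?_⟩
  calc cornerUnitary C₂ (flipUnitary C₁ X) * (star C₂ * C₂ * (star C₁ * C₁) * (star X * X)) *
        star (cornerUnitary C₂ (flipUnitary C₁ X))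
      = flipUnitary C₁ X * (star C₂ * C₂ * (star C₁ * C₁ * (star X * X))) *
          star (flipUnitary C₁ X) := by
        rw [mul_assoc (star C₂ * C₂), cornerUnitary_conj hC₂0 hsum₂ hw hC₂w hA₂A₁P]
    _ = star C₂ * C₂ * (flipUnitary C₁ X * (star C₁ * C₁ * (star X * X)) *
          star (flipUnitary C₁ X)) := by
        rw [← mul_assoc, ← hA₂w.eq]; simp only [mul_assoc]
    _ = star C₂ * C₂ * (star C₁ * C₁) * (X * star X) := by
        rw [flipUnitary_conj hC₁0 hsum₁ hX hC₁X hC₁Xs]; simp only [mul_assoc]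

theorem stmt_2 {D : Type*} [CStarAlgebra D] (C₁ C₂ A₁ B₁ A₂ B₂ : D)
    (hA₁ : A₁ = star C₁ * C₁) (hB₁ : B₁ = C₁ * star C₁)
    (hA₂ : A₂ = star C₂ * C₂) (hB₂ : B₂ = C₂ * star C₂)
    (hA₁idem : A₁ * A₁ = A₁) (hB₁idem : B₁ * B₁ = B₁)
    (hA₂idem : A₂ * A₂ = A₂) (hB₂idem : B₂ * B₂ = B₂)
    (hsum₁ : A₁ + B₁ = 1) (hsum₂ : A₂ + B₂ = 1)
    (P Q X : D)
    (hP : star P = P ∧ P * P = P) (hQ : star Q = Q ∧ Q * Q = Q)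
    (hXP : star X * X = P) (hXQ : X * star X = Q)
    (hC₁X : Commute C₁ X) (hC₁Xs : Commute C₁ (star X))
    (hC₁P : Commute C₁ P) (hC₁Q : Commute C₁ Q)
    (hC₂X : Commute C₂ X) (hC₂Xs : Commute C₂ (star X))
    (hC₂P : Commute C₂ P) (hC₂Q : Commute C₂ Q)
    (hC₂C₁ : Commute C₂ C₁) (hC₂C₁s : Commute C₂ (star C₁)) :
    ∃ U : D, U ∈ unitary D ∧ UnitaryPath (1 : D) U ∧
      U * (A₂ * A₁ * P) * star U = A₂ * A₁ * Q :=
  stmt_2_general C₁ C₂ A₁ B₁ A₂ B₂ hA₁ hB₁ hA₂ hB₂ hA₁idem hA₂idem hsum₁ hsum₂ P Q X hP hXP hXQ hC₁X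
    hC₁Xs hC₂X hC₂Xs hC₂C₁ hC₂C₁s
end

section
/- Let D be a unital complex C*-algebra and let C ∈ D be such that A := C*C and B := CC* are projections with A + B = 1. If U and V are unitaries of D commuting with both C and C*, then A(UV) + B is connected to A(VU) + B, and A(UVU*) + B is connected to AV + B, by continuous paths within the unitary group of D. -/
section TopologicalGroup

variable {G : Type*} [Group G] [TopologicalSpace G] [IsTopologicalGroup G]

theorem Joined.conj_of_commute {k d x : G} (hk : Joined 1 k) (hx : Commute (k * d * k⁻¹) x) :
    Joined x (d * x * d⁻¹) := by
  have hw : Joined 1 (d * (k * d * k⁻¹)⁻¹) := by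
    simpa [mul_assoc] using (((Joined.refl d).mul hk).mul (Joined.refl d⁻¹)).mul hk.inv
  have hconj : d * x * d⁻¹ = d * (k * d * k⁻¹)⁻¹ * x * (d * (k * d * k⁻¹)⁻¹)⁻¹ := by
    calc d * x * d⁻¹ = d * ((k * d * k⁻¹)⁻¹ * x * (k * d * k⁻¹)⁻¹⁻¹) * d⁻¹ := by
          rw [hx.inv_left.mul_inv_cancel]
      _ = _ := by group
  rw [hconj]
  simpa using (hw.mul (Joined.refl x)).mul hw.inv

end TopologicalGroup

section UnitaryPath

variable {D : Type*} [Monoid D] [StarMul D] [TopologicalSpace D]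

theorem UnitaryPath.symm {u v : D} (h : UnitaryPath u v) : UnitaryPath v u := by
  obtain ⟨f, hf, hfu, h0, h1⟩ := h
  have hrev : Set.MapsTo (fun t : ℝ => 1 - t) (Set.Icc 0 1) (Set.Icc 0 1) :=
    fun t ⟨h0, h1⟩ => ⟨by linarith, by linarith⟩
  exact ⟨fun t => f (1 - t), hf.comp (continuous_const.sub continuous_id).continuousOn hrev,
    fun t ht => hfu _ (hrev ht), by simpa using h1, by simpa using h0⟩

theorem unitaryPath_of_joined {u v : unitary D} (h : Joined u v) : UnitaryPath (u : D) v :=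
  ⟨fun t => h.somePath.extend t,
    (continuous_subtype_val.comp h.somePath.continuous_extend).continuousOn,
    fun t _ => (h.somePath.extend t).2, by simp, by simp⟩

end UnitaryPath

theorem Unitary.joined_one_of_star_eq_neg {D : Type*} [CStarAlgebra D] (u : unitary D)
    (hu : star (u : D) = -u) : Joined 1 u := by
  have hsq : star ((u : D) - 1) * ((u : D) - 1) = 2 := by
    have h := Unitary.coe_star_mul_self u
    rw [hu] at h
    calc star ((u : D) - 1) * ((u : D) - 1) = -(u : D) * u + 1 := by
          rw [star_sub, star_one, hu]; noncomm_ring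
      _ = 2 := by rw [h, one_add_one_eq_two]
  have hnorm : ‖(u : D) - 1‖ * ‖(u : D) - 1‖ ≤ 2 := by
    rw [← CStarRing.norm_star_mul_self, hsq]
    nontriviality D
    rw [← one_add_one_eq_two]
    exact (norm_add_le 1 1).trans (by norm_num)
  refine Unitary.joined 1 u ?_
  rw [OneMemClass.coe_one]
  nlinarith [norm_nonneg ((u : D) - 1)]

section Corner

-- `p * u + (1 - p)` acts as `u` on the corner cut out by `p` and as `1` on its complement.
variable {R : Type*} [Ring R] {p : R}

theorem IsIdempotentElem.corner_mul_corner (hp : IsIdempotentElem p) {x y : R}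
    (hx : Commute p x) : (p * x + (1 - p)) * (p * y + (1 - p)) = p * (x * y) + (1 - p) := by
  have hpxp : p * x * p = p * x := by rw [mul_assoc, ← hx.eq, ← mul_assoc, hp.eq]
  have hpx1p : p * x * (1 - p) = 0 := by rw [mul_sub, mul_one, hpxp, sub_self]
  calc (p * x + (1 - p)) * (p * y + (1 - p))
      = p * x * p * y + p * x * (1 - p) + (1 - p) * p * y + (1 - p) * (1 - p) := by noncomm_ring
    _ = p * (x * y) + (1 - p) := by
      rw [hpxp, hpx1p, hp.one_sub_mul_self, hp.one_sub.eq, zero_mul, add_zero, add_zero,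
        mul_assoc]

theorem IsIdempotentElem.commute_corner_one_sub (hp : IsIdempotentElem p) {v x : R}
    (hv : Commute p v) (hx : Commute p x) : Commute ((1 - p) * v + p) (p * x + (1 - p)) := by
  have hvp : (1 - p) * v * p = 0 := by
    rw [mul_assoc, ← hv.eq, ← mul_assoc, hp.one_sub_mul_self, zero_mul]
  have hv1p : (1 - p) * v * (1 - p) = (1 - p) * v := by
    rw [mul_assoc, ← ((Commute.one_left v).sub_left hv).eq, ← mul_assoc, hp.one_sub.eq]
  have hx1p : p * x * (1 - p) = 0 := by
    rw [mul_assoc, ← ((Commute.one_left x).sub_left hx).eq, ← mul_assoc, hp.mul_one_sub_self,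
      zero_mul]
  have hxp : p * x * p = p * x := by rw [mul_assoc, ← hx.eq, ← mul_assoc, hp.eq]
  calc ((1 - p) * v + p) * (p * x + (1 - p))
      = (1 - p) * v * p * x + (1 - p) * v * (1 - p) + p * p * x + p * (1 - p) := by noncomm_ring
    _ = p * x * (1 - p) * v + p * x * p + (1 - p) * (1 - p) * v + (1 - p) * p := by
      rw [hvp, hv1p, hx1p, hxp, hp.eq, hp.one_sub.eq, hp.mul_one_sub_self,
        hp.one_sub_mul_self, zero_mul, zero_mul]
      abel
    _ = (p * x + (1 - p)) * ((1 - p) * v + p) := by noncomm_ring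

variable [StarRing R]

theorem mul_corner_mul_star {k v : R} (hk : k * star k = 1) (hkv : Commute (star k) v) :
    k * (p * v + (1 - p)) * star k = k * p * star k * v + (1 - k * p * star k) := by
  simp only [mul_add, add_mul, mul_sub, sub_mul, mul_one, mul_assoc, ← hkv.eq, hk]

theorem IsSelfAdjoint.star_corner (hp : IsSelfAdjoint p) {u : R} (hpu : Commute p u) :
    star (p * u + (1 - p)) = p * star u + (1 - p) := by
  have hpu' : Commute p (star u) := hp.star_eq ▸ hpu.star_star
  rw [star_add, star_mul, star_sub, star_one, hp.star_eq, hpu'.eq]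

theorem IsStarProjection.corner_mem_unitary (hp : IsStarProjection p) {u : R}
    (hu : u ∈ unitary R) (hpu : Commute p u) : p * u + (1 - p) ∈ unitary R := by
  have hpu' : Commute p (star u) := hp.isSelfAdjoint.star_eq ▸ hpu.star_star
  rw [Unitary.mem_iff, hp.isSelfAdjoint.star_corner hpu,
    hp.isIdempotentElem.corner_mul_corner hpu', hp.isIdempotentElem.corner_mul_corner hpu,
    Unitary.star_mul_self_of_mem hu, Unitary.mul_star_self_of_mem hu, mul_one, add_sub_cancel, and_self]

end Corner

theorem mul_star_mul_self_of_isIdempotentElem {E : Type*} [NonUnitalNormedRing E] [StarRing E]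
    [CStarRing E] {c : E} (h : IsIdempotentElem (star c * c)) : c * (star c * c) = c := by
  rw [← sub_eq_zero, ← CStarRing.star_mul_self_eq_zero_iff]
  have hexp : star (c * (star c * c) - c) * (c * (star c * c) - c) =
      star c * c * (star c * c) * (star c * c) - star c * c * (star c * c) -
        star c * c * (star c * c) + star c * c := by
    simp only [star_sub, star_mul, star_star]; noncomm_ring
  rw [hexp, h.eq, h.eq, sub_self, zero_sub, neg_add_cancel]

section PartialIsometry

-- `C` is a partial isometry with initial projection `p` and final projection `1 - p`.

variable {D : Type*} [CStarAlgebra D] {C p : D}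

theorem mul_self_eq_zero_of_mul_star_self_eq_one_sub (hC : star C * C = p)
    (hC' : C * star C = 1 - p) (hp : IsIdempotentElem p) : C * C = 0 := by
  have hCp : C * p = C := hC ▸ mul_star_mul_self_of_isIdempotentElem (hC ▸ hp)
  have hpC : p * C = 0 := by
    have : (1 - p) * C = C := by rw [← hC', mul_assoc, hC, hCp]
    rwa [sub_mul, one_mul, sub_eq_self] at this
  rw [← mul_zero C, ← hpC, ← mul_assoc, hCp]

theorem sub_star_mem_unitary (hC : star C * C = p) (hC' : C * star C = 1 - p)
    (hp : IsIdempotentElem p) : C - star C ∈ unitary D := by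
  have hCC := mul_self_eq_zero_of_mul_star_self_eq_one_sub hC hC' hp
  have hC'C' : star C * star C = 0 := by rw [← star_mul, hCC, star_zero]
  rw [Unitary.mem_iff, star_sub, star_star]
  constructor
  · calc (star C - C) * (C - star C) = star C * C + C * star C - C * C - star C * star C := by
          noncomm_ring
      _ = 1 := by rw [hC, hC', hCC, hC'C']; abel
  · calc (C - star C) * (star C - C) = C * star C + star C * C - C * C - star C * star C := by
          noncomm_ring
      _ = 1 := by rw [hC, hC', hCC, hC'C']; abel

theorem sub_star_mul_mul_star_sub (hC : star C * C = p) (hC' : C * star C = 1 - p)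
    (hp : IsIdempotentElem p) : (C - star C) * p * star (C - star C) = 1 - p := by
  have hCC := mul_self_eq_zero_of_mul_star_self_eq_one_sub hC hC' hp
  have hCp : C * p = C := hC ▸ mul_star_mul_self_of_isIdempotentElem (hC ▸ hp)
  have hC'p : star C * p = 0 := by rw [← hC, ← mul_assoc, ← star_mul, hCC, star_zero, zero_mul]
  rw [sub_mul, hCp, hC'p, sub_zero, star_sub, star_star, mul_sub, hC', hCC, sub_zero]

theorem unitaryPath_corner_conj (hC : star C * C = p) (hC' : C * star C = 1 - p)
    (hp : IsIdempotentElem p) {x v : D} (hx : x ∈ unitary D) (hv : v ∈ unitary D)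
    (hCx : Commute C x) (hC'x : Commute (star C) x) (hCv : Commute C v)
    (hC'v : Commute (star C) v) :
    UnitaryPath (p * x + (1 - p)) (p * (v * x * star v) + (1 - p)) := by
  have hpP : IsStarProjection p := ⟨hp, hC ▸ IsSelfAdjoint.star_mul_self C⟩
  have hpx : Commute p x := hC ▸ hC'x.mul_left hCx
  have hpv : Commute p v := hC ▸ hC'v.mul_left hCv
  let k : unitary D := ⟨C - star C, sub_star_mem_unitary hC hC' hp⟩
  let d : unitary D := ⟨p * v + (1 - p), hpP.corner_mem_unitary hv hpv⟩
  let y : unitary D := ⟨p * x + (1 - p), hpP.corner_mem_unitary hx hpx⟩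
  have hk : Joined 1 k := Unitary.joined_one_of_star_eq_neg k (by simp [k])
  have hkd : ((k * d * k⁻¹ : unitary D) : D) = (1 - p) * v + p := by
    rw [← Unitary.star_eq_inv]
    have hkv : Commute (star (C - star C)) v := by
      rw [star_sub, star_star]; exact hC'v.sub_left hCv
    simp only [Submonoid.coe_mul, Unitary.coe_star, k, d]
    rw [mul_corner_mul_star (Unitary.mul_star_self_of_mem k.2) hkv,
      sub_star_mul_mul_star_sub hC hC' hp, sub_sub_cancel]
  have hkdy : Commute (k * d * k⁻¹) y := by
    have h : Commute ((k * d * k⁻¹ : unitary D) : D) y := by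
      rw [hkd]; exact hp.commute_corner_one_sub hpv hpx
    exact Subtype.ext h.eq
  have hdy : ((d * y * d⁻¹ : unitary D) : D) = p * (v * x * star v) + (1 - p) := by
    rw [← Unitary.star_eq_inv]
    simp only [Submonoid.coe_mul, Unitary.coe_star, d, y]
    rw [hpP.isSelfAdjoint.star_corner hpv, hp.corner_mul_corner hpv,
      hp.corner_mul_corner (hpv.mul_right hpx)]
  exact hdy ▸ unitaryPath_of_joined (hk.conj_of_commute hkdy)

end PartialIsometry

theorem stmt_7_general {D : Type*} [CStarAlgebra D] (C A B : D)
    (hA : A = star C * C) (hB : B = C * star C)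
    (hAidem : A * A = A) (hsum : A + B = 1) :
    ∀ U V : D, U ∈ unitary D → V ∈ unitary D →
      Commute C U → Commute (star C) U → Commute C V → Commute (star C) V →
      UnitaryPath (A * (U * V) + B) (A * (V * U) + B) ∧
      UnitaryPath (A * (U * V * star U) + B) (A * V + B) := by
  intro U V hU hV hCU hC'U hCV hC'V
  obtain rfl : B = 1 - A := eq_sub_of_add_eq' hsum
  constructor
  · have hVUV : V * (U * V) * star V = V * U := by
      rw [mul_assoc, mul_assoc, Unitary.mul_star_self_of_mem hV, mul_one]
    simpa only [hVUV] using unitaryPath_corner_conj hA.symm hB.symm hAidem (mul_mem hU hV) hV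
      (hCU.mul_right hCV) (hC'U.mul_right hC'V) hCV hC'V
  · exact (unitaryPath_corner_conj hA.symm hB.symm hAidem hV hU hCV hC'V hCU hC'U).symm

/-- If `A := C*C` and `B := CC*` are projections with `A + B = 1`, and
`U, V` are unitaries commuting with `C` and `C*`, then `A(UV) + B` is connected to
`A(VU) + B`, and `A(UVU*) + B` is connected to `AV + B`, by continuous paths within
the unitary group of `D`. -/
theorem stmt_7 {D : Type*} [CStarAlgebra D] (C A B : D)
    (hA : A = star C * C) (hB : B = C * star C)
    (hAidem : A * A = A) (hBidem : B * B = B) (hsum : A + B = 1) :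
    ∀ U V : D, U ∈ unitary D → V ∈ unitary D →
      Commute C U → Commute (star C) U → Commute C V → Commute (star C) V →
      UnitaryPath (A * (U * V) + B) (A * (V * U) + B) ∧
      UnitaryPath (A * (U * V * star U) + B) (A * V + B) :=
  stmt_7_general C A B hA hB hAidem hsum
end

section
/- Let D be a unital complex C*-algebra and let C₁, C₂ ∈ D be such that, for i = 1, 2, Aᵢ := Cᵢ*Cᵢ and Bᵢ := CᵢCᵢ* are projections with Aᵢ + Bᵢ = 1, and assume C₂ commutes with both C₁ and C₁*. Put X := A₂A₁ + C₂*C₁ + C₂C₁* + B₂B₁. Then X = X*, X² = 1 (so X is a self-adjoint unitary of D, connected to 1 by a continuous path within the unitary group of D), and XA₂X = A₁, XB₂X = B₁, XA₁X = A₂, XB₁X = B₂. -/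
open Finset

structure IsMatrixUnits {ι R : Type*} [Fintype ι] [DecidableEq ι] [Semiring R]
    (e : ι → ι → R) : Prop where
  mul : ∀ i j k l, e i j * e k l = if j = k then e i l else 0
  sum_diag : ∑ i, e i i = 1

def matrixUnitsSwap {ι R : Type*} [Fintype ι] [Semiring R] (e f : ι → ι → R) : R :=
  ∑ i, ∑ j, e i j * f j i

section MatrixUnitsSwap

variable {ι R : Type*} [Fintype ι] [Semiring R] {e f : ι → ι → R}

theorem star_matrixUnitsSwap [StarRing R] (he : ∀ i j, star (e i j) = e j i)
    (hf : ∀ i j, star (f i j) = f j i) (hef : ∀ i j k l, Commute (e i j) (f k l)) :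
    star (matrixUnitsSwap e f) = matrixUnitsSwap e f := by
  simp only [matrixUnitsSwap, star_sum, star_mul, he, hf, (hef _ _ _ _).eq]
  exact sum_comm

variable [DecidableEq ι] (he : IsMatrixUnits e) (hf : IsMatrixUnits f)
  (hef : ∀ i j k l, Commute (e i j) (f k l))
include he hf hef

theorem matrixUnitsSwap_mul (a b : ι) :
    matrixUnitsSwap e f * e a b = f a b * matrixUnitsSwap e f :=
  calc matrixUnitsSwap e f * e a b = ∑ i, ∑ j, e i j * e a b * f j i := by
        simp only [matrixUnitsSwap, sum_mul, (hef _ _ _ _).symm.right_comm]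
    _ = ∑ i, e i b * f a i := by simp [he.mul]
    _ = ∑ i, ∑ j, e i j * (f a b * f j i) := by simp [hf.mul]
    _ = f a b * matrixUnitsSwap e f := by
        simp only [matrixUnitsSwap, mul_sum, (hef _ _ _ _).symm.left_comm]

theorem matrixUnitsSwap_mul_self : matrixUnitsSwap e f * matrixUnitsSwap e f = 1 :=
  calc matrixUnitsSwap e f * matrixUnitsSwap e f
      = ∑ k, ∑ l, ∑ i, ∑ j, e i j * e k l * (f j i * f l k) := by
        simp only [matrixUnitsSwap, sum_mul, mul_sum, (hef _ _ _ _).symm.mul_mul_mul_comm]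
    _ = ∑ k, ∑ i, e i i * f k k := by simp [he.mul, hf.mul]
    _ = (∑ i, e i i) * ∑ k, f k k := by rw [sum_mul_sum, sum_comm]
    _ = 1 := by rw [he.sum_diag, hf.sum_diag, one_mul]

theorem matrixUnitsSwap_conj_left (a b : ι) :
    matrixUnitsSwap e f * e a b * matrixUnitsSwap e f = f a b := by
  rw [matrixUnitsSwap_mul he hf hef, mul_assoc, matrixUnitsSwap_mul_self he hf hef, mul_one]

theorem matrixUnitsSwap_conj_right (a b : ι) :
    matrixUnitsSwap e f * f a b * matrixUnitsSwap e f = e a b := by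
  rw [mul_assoc, ← matrixUnitsSwap_mul he hf hef, ← mul_assoc,
    matrixUnitsSwap_mul_self he hf hef, one_mul]

end MatrixUnitsSwap

section MatrixUnitsOf

variable {R : Type*} [Ring R] [StarRing R]

def matrixUnitsOf (C : R) : Fin 2 → Fin 2 → R :=
  ![![star C * C, star C], ![C, C * star C]]

theorem star_matrixUnitsOf (C : R) (i j : Fin 2) :
    star (matrixUnitsOf C i j) = matrixUnitsOf C j i := by
  fin_cases i <;> fin_cases j <;> simp [matrixUnitsOf]

theorem isMatrixUnits_matrixUnitsOf {C : R} (hC : C * star C * C = C) (hCC : C * C = 0)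
    (hsum : star C * C + C * star C = 1) : IsMatrixUnits (matrixUnitsOf C) where
  mul i j k l := by
    have hC' : star C * C * star C = star C := by simpa [mul_assoc] using congrArg star hC
    have hCC' : star C * star C = 0 := by simpa using congrArg star hCC
    have hCCx (x : R) : C * (C * x) = 0 := by rw [← mul_assoc, hCC, zero_mul]
    have hCCx' (x : R) : star C * (star C * x) = 0 := by rw [← mul_assoc, hCC', zero_mul]
    simp only [mul_assoc] at hC hC'
    fin_cases i <;> fin_cases j <;> fin_cases k <;> fin_cases l <;>
      simp [matrixUnitsOf, mul_assoc, hC, hC', hCC, hCC', hCCx, hCCx']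
  sum_diag := by simpa [matrixUnitsOf] using hsum

theorem commute_matrixUnitsOf {C C' : R} (h : Commute C C') (h' : Commute C (star C'))
    (i j k l : Fin 2) : Commute (matrixUnitsOf C i j) (matrixUnitsOf C' k l) := by
  have h'' : Commute (star C) C' := by simpa using h'.star_star
  fin_cases i <;> fin_cases j <;> fin_cases k <;> fin_cases l <;>
    simp [matrixUnitsOf, Commute.mul_left, Commute.mul_right, h, h', h'', h.star_star]

end MatrixUnitsOf

section PartialIsometry

theorem CStarRing.mul_star_mul_eq_self_of_isIdempotentElem {R : Type*} [NonUnitalNormedRing R]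
    [StarRing R] [CStarRing R] {C : R} (h : IsIdempotentElem (star C * C)) :
    C * star C * C = C := by
  rw [← sub_eq_zero, ← CStarRing.star_mul_self_eq_zero_iff]
  set P := star C * C
  calc star (C * star C * C - C) * (C * star C * C - C) = P * P * P - P * P - (P * P - P) := by
        simp only [P, star_sub, star_mul, star_star]; noncomm_ring
    _ = 0 := by simp [h.eq]

variable {R : Type*} [NormedRing R] [StarRing R] [CStarRing R] {C : R}

theorem CStarRing.mul_self_eq_zero_of_add_eq_one (hC : C * star C * C = C)
    (hsum : star C * C + C * star C = 1) : C * C = 0 := by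
  have h : star C * C * C = 0 := by
    simpa [add_mul, hC] using congrArg (· * C) hsum
  rw [← CStarRing.star_mul_self_eq_zero_iff, star_mul]
  simp only [mul_assoc] at h ⊢
  rw [h, mul_zero]

theorem CStarRing.isMatrixUnits_matrixUnitsOf (h : IsIdempotentElem (star C * C))
    (hsum : star C * C + C * star C = 1) : IsMatrixUnits (matrixUnitsOf C) :=
  have hC := mul_star_mul_eq_self_of_isIdempotentElem h
  _root_.isMatrixUnits_matrixUnitsOf hC (mul_self_eq_zero_of_add_eq_one hC hsum) hsum

end PartialIsometry

section UnitaryPath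

variable {D : Type*} [Ring D] [StarRing D] [Algebra ℂ D] [StarModule ℂ D]

theorem IsStarProjection.one_add_smul_mem_unitary {q : D} (hq : IsStarProjection q) {w : ℂ}
    (hw : star w * w = 1) : 1 + (w - 1) • q ∈ unitary D := by
  have hmul (a b : ℂ) : (1 + a • q) * (1 + b • q) = 1 + (a + b + a * b) • q := by
    simp only [mul_add, add_mul, one_mul, mul_one, smul_mul_smul_comm, hq.isIdempotentElem.eq,
      add_smul]
    abel
  have hstar : star (1 + (w - 1) • q) = 1 + (star w - 1) • q := by
    simp [star_smul, hq.isSelfAdjoint.star_eq]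
  have h₁ : star w - 1 + (w - 1) + (star w - 1) * (w - 1) = 0 := by linear_combination hw
  have h₂ : w - 1 + (star w - 1) + (w - 1) * (star w - 1) = 0 := by linear_combination hw
  rw [Unitary.mem_iff, hstar, hmul, hmul, h₁, h₂, zero_smul, add_zero]
  exact ⟨rfl, rfl⟩

theorem isStarProjection_half_smul_one_sub {X : D} (hX : IsSelfAdjoint X) (hXX : X * X = 1) :
    IsStarProjection ((2⁻¹ : ℂ) • (1 - X)) where
  isIdempotentElem := by
    have h : (1 - X) * (1 - X) = (2 : ℂ) • (1 - X) := by
      simp only [sub_mul, mul_sub, one_mul, mul_one, hXX, two_smul]; abel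
    rw [IsIdempotentElem, smul_mul_smul_comm, h, smul_smul]
    norm_num
  isSelfAdjoint := by
    simp [IsSelfAdjoint, star_smul, hX.star_eq]

variable [TopologicalSpace D] [ContinuousAdd D] [ContinuousSMul ℂ D]

theorem unitaryPath_one_of_isSelfAdjoint {X : D} (hX : IsSelfAdjoint X) (hXX : X * X = 1) :
    UnitaryPath 1 X := by
  have hq := isStarProjection_half_smul_one_sub hX hXX
  refine ⟨fun t : ℝ ↦ 1 + (Complex.exp ((Real.pi * t : ℝ) * Complex.I) - 1) • (2⁻¹ : ℂ) • (1 - X),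
    by fun_prop, fun t _ ↦ hq.one_add_smul_mem_unitary ?_, by simp, ?_⟩
  · rw [RCLike.star_def, Complex.conj_mul', Complex.norm_exp_ofReal_mul_I]; simp
  · norm_num [Complex.exp_pi_mul_I, smul_smul]

end UnitaryPath

theorem stmt_8_general {D : Type*} [CStarAlgebra D] (C₁ C₂ A₁ B₁ A₂ B₂ X : D)
    (hA₁ : A₁ = star C₁ * C₁) (hB₁ : B₁ = C₁ * star C₁)
    (hA₂ : A₂ = star C₂ * C₂) (hB₂ : B₂ = C₂ * star C₂)
    (hA₁idem : A₁ * A₁ = A₁)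
    (hA₂idem : A₂ * A₂ = A₂)
    (hsum₁ : A₁ + B₁ = 1) (hsum₂ : A₂ + B₂ = 1)
    (hcomm : Commute C₂ C₁) (hcomms : Commute C₂ (star C₁))
    (hX : X = A₂ * A₁ + star C₂ * C₁ + C₂ * star C₁ + B₂ * B₁) :
    star X = X ∧ X * X = 1 ∧ X ∈ unitary D ∧ UnitaryPath (1 : D) X ∧
      X * A₂ * X = A₁ ∧ X * B₂ * X = B₁ ∧ X * A₁ * X = A₂ ∧ X * B₁ * X = B₂ := by
  subst hA₁ hB₁ hA₂ hB₂
  have he₁ := CStarRing.isMatrixUnits_matrixUnitsOf hA₁idem hsum₁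
  have he₂ := CStarRing.isMatrixUnits_matrixUnitsOf hA₂idem hsum₂
  have hcomm₂₁ := commute_matrixUnitsOf hcomm hcomms
  obtain rfl : X = matrixUnitsSwap (matrixUnitsOf C₂) (matrixUnitsOf C₁) := by
    simp [hX, matrixUnitsSwap, matrixUnitsOf, Fin.sum_univ_two, add_assoc]
  have hstar := star_matrixUnitsSwap (star_matrixUnitsOf C₂) (star_matrixUnitsOf C₁) hcomm₂₁
  have hXX := matrixUnitsSwap_mul_self he₂ he₁ hcomm₂₁
  exact ⟨hstar, hXX, Unitary.mem_iff.2 ⟨by rw [hstar, hXX], by rw [hstar, hXX]⟩,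
    unitaryPath_one_of_isSelfAdjoint hstar hXX,
    matrixUnitsSwap_conj_left he₂ he₁ hcomm₂₁ 0 0, matrixUnitsSwap_conj_left he₂ he₁ hcomm₂₁ 1 1,
    matrixUnitsSwap_conj_right he₂ he₁ hcomm₂₁ 0 0, matrixUnitsSwap_conj_right he₂ he₁ hcomm₂₁ 1 1⟩

/-- With `Aᵢ := Cᵢ*Cᵢ`, `Bᵢ := CᵢCᵢ*` projections summing to `1` and
`C₂` commuting with `C₁` and `C₁*`, the element
`X := A₂A₁ + C₂*C₁ + C₂C₁* + B₂B₁` is a self-adjoint unitary (connected to `1` by a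
continuous path within the unitary group) and `XA₂X = A₁`, `XB₂X = B₁`,
`XA₁X = A₂`, `XB₁X = B₂`. -/
theorem stmt_8 {D : Type*} [CStarAlgebra D] (C₁ C₂ A₁ B₁ A₂ B₂ X : D)
    (hA₁ : A₁ = star C₁ * C₁) (hB₁ : B₁ = C₁ * star C₁)
    (hA₂ : A₂ = star C₂ * C₂) (hB₂ : B₂ = C₂ * star C₂)
    (hA₁idem : A₁ * A₁ = A₁) (hB₁idem : B₁ * B₁ = B₁)
    (hA₂idem : A₂ * A₂ = A₂) (hB₂idem : B₂ * B₂ = B₂)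
    (hsum₁ : A₁ + B₁ = 1) (hsum₂ : A₂ + B₂ = 1)
    (hcomm : Commute C₂ C₁) (hcomms : Commute C₂ (star C₁))
    (hX : X = A₂ * A₁ + star C₂ * C₁ + C₂ * star C₁ + B₂ * B₁) :
    star X = X ∧ X * X = 1 ∧ X ∈ unitary D ∧ UnitaryPath (1 : D) X ∧
      X * A₂ * X = A₁ ∧ X * B₂ * X = B₁ ∧ X * A₁ * X = A₂ ∧ X * B₁ * X = B₂ :=
  stmt_8_general C₁ C₂ A₁ B₁ A₂ B₂ X hA₁ hB₁ hA₂ hB₂ hA₁idem hA₂idem hsum₁ hsum₂ hcomm hcomms hX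
end

section
/- Let F and G be C*-algebras and let φ : F → G be a surjective *-homomorphism. Then the *-homomorphism ψ : C([0,1], F) → C([0,1], G) defined by ψ(x) = φ ∘ x is surjective. -/
/-!
By the open mapping theorem, `φ` has (nonlinear) lifts with `‖lift z‖ ≤ C ‖z‖`. Lifting `y` at
each time and gluing these locally valid constants with a partition of unity gives `x` with
`‖x‖ ≤ C ‖y‖` and `φ ∘ x` uniformly `ε`-close to `y`; gluing is possible because the admissible
values at each time form a convex set. Correcting the error iteratively, as in the proof of the
open mapping theorem, converges in the complete space `C([0,1], F)` to an exact preimage.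
-/

open Function Metric Filter Topology

open scoped CStarAlgebra

theorem AddMonoidHom.surjective_of_mem_closure_image_closedBall {E F : Type*}
    [NormedAddCommGroup E] [CompleteSpace E] [NormedAddCommGroup F]
    (f : E →+ F) (hf : Continuous f) {C : ℝ} (hC : 0 ≤ C)
    (h : ∀ y, y ∈ closure (f '' closedBall 0 (C * ‖y‖))) : Surjective f := by
  have approx : ∀ y, ∃ x, ‖y - f x‖ ≤ ‖y‖ / 2 ∧ ‖x‖ ≤ C * ‖y‖ := by
    intro y
    rcases eq_or_ne y 0 with rfl | hy
    · exact ⟨0, by simp⟩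
    obtain ⟨_, ⟨x, hx, rfl⟩, hdist⟩ :=
      Metric.mem_closure_iff.1 (h y) (‖y‖ / 2) (by positivity)
    exact ⟨x, (dist_eq_norm y (f x)).symm.trans_le hdist.le, mem_closedBall_zero_iff.1 hx⟩
  choose g hg_dist hg_norm using approx
  intro y
  let r : ℕ → F := fun n => (fun z => z - f (g z))^[n] y
  have hr_succ : ∀ n, r (n + 1) = r n - f (g (r n)) := fun n => iterate_succ_apply' _ n y
  have hr_norm : ∀ n, ‖r n‖ ≤ (1 / 2) ^ n * ‖y‖ := by
    intro n
    induction n with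
    | zero => simp [r]
    | succ n ih =>
      rw [hr_succ, pow_succ]
      linarith [hg_dist (r n)]
  have hu_norm : ∀ n, ‖g (r n)‖ ≤ C * ‖y‖ * (1 / 2) ^ n := fun n =>
    calc ‖g (r n)‖ ≤ C * ‖r n‖ := hg_norm _
      _ ≤ C * ((1 / 2) ^ n * ‖y‖) := by gcongr; exact hr_norm n
      _ = C * ‖y‖ * (1 / 2) ^ n := by ring
  have hu : Summable fun n => g (r n) :=
    .of_norm_bounded (summable_geometric_two.mul_left _) hu_norm
  have hpartial : ∀ n, f (∑ i ∈ Finset.range n, g (r i)) = y - r n := by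
    intro n
    induction n with
    | zero => simp [r]
    | succ n ih => rw [Finset.sum_range_succ, map_add, ih, hr_succ]; abel
  have hr_lim : Tendsto r atTop (𝓝 0) := by
    refine squeeze_zero_norm hr_norm ?_
    simpa using (tendsto_pow_atTop_nhds_zero_of_lt_one (by norm_num : (0 : ℝ) ≤ 1 / 2)
      (by norm_num)).mul_const ‖y‖
  have hlim := (hf.tendsto _).comp hu.hasSum.tendsto_sum_nat
  simp only [comp_def, hpartial] at hlim
  exact ⟨_, tendsto_nhds_unique hlim (by simpa using tendsto_const_nhds.sub hr_lim)⟩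

theorem ContinuousLinearMap.mem_closure_compLeftContinuous_image_closedBall
    {X E F : Type*} [TopologicalSpace X] [CompactSpace X] [T2Space X]
    [NormedAddCommGroup E] [NormedSpace ℝ E] [NormedAddCommGroup F] [NormedSpace ℝ F]
    (T : E →L[ℝ] F) {C : ℝ} (hC : 0 ≤ C) (hT : ∀ z, ∃ w, T w = z ∧ ‖w‖ ≤ C * ‖z‖)
    (y : C(X, F)) : y ∈ closure (T.compLeftContinuous ℝ X '' closedBall 0 (C * ‖y‖)) := by
  refine Metric.mem_closure_iff.2 fun ε hε => ?_
  let admissible : X → Set E := fun s => closedBall 0 (C * ‖y‖) ∩ T ⁻¹' ball (y s) ε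
  have hconvex : ∀ s, Convex ℝ (admissible s) := fun s =>
    (convex_closedBall _ _).inter ((convex_ball _ _).linear_preimage T.toLinearMap)
  have hlocal : ∀ s₀, ∃ w : E, ∀ᶠ s in 𝓝 s₀, w ∈ admissible s := by
    intro s₀
    obtain ⟨w, hTw, hw⟩ := hT (y s₀)
    refine ⟨w, ?_⟩
    have hw' : ‖w‖ ≤ C * ‖y‖ := hw.trans (by gcongr; exact y.norm_coe_le_norm s₀)
    filter_upwards [y.continuous.continuousAt (ball_mem_nhds (y s₀) hε)] with s hs
    exact ⟨mem_closedBall_zero_iff.2 hw', by simpa [hTw, dist_comm] using hs⟩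
  obtain ⟨x, hx⟩ := exists_continuous_forall_mem_convex_of_local_const hconvex hlocal
  refine ⟨_, ⟨x, ?_, rfl⟩, ?_⟩
  · exact mem_closedBall_zero_iff.2
      ((ContinuousMap.norm_le x (by positivity)).2 fun s => mem_closedBall_zero_iff.1 (hx s).1)
  · exact (ContinuousMap.dist_lt_iff hε).2 fun s => by
      rw [dist_comm]
      exact (hx s).2

/-- If `φ : F → G` is a surjective *-homomorphism of C*-algebras, then
the induced *-homomorphism `ψ : C([0,1], F) → C([0,1], G)`, `ψ(x) = φ ∘ x`, is
surjective. -/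
theorem stmt_9 {F G : Type*} [NonUnitalCStarAlgebra F] [NonUnitalCStarAlgebra G]
    (φ : F →⋆ₙₐ[ℂ] G) (hφ : Function.Surjective φ) :
    ∀ y : C(unitInterval, G), ∃ x : C(unitInterval, F), ∀ t, φ (x t) = y t := by
  let T : F →L[ℝ] G := ⟨(φ : F →ₗ[ℂ] G).restrictScalars ℝ, map_continuous φ⟩
  obtain ⟨C, hC, hlift⟩ := T.exists_preimage_norm_le hφ
  let ψ := T.compLeftContinuous ℝ unitInterval
  have hψ : Surjective ψ :=
    (ψ : C(unitInterval, F) →+ C(unitInterval, G)).surjective_of_mem_closure_image_closedBall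
      ψ.continuous hC.le (T.mem_closure_compLeftContinuous_image_closedBall hC.le hlift)
  intro y
  obtain ⟨x, hx⟩ := hψ y
  exact ⟨x, fun t => congr($hx t)⟩
end

section
/- Let S be a finite group. In the metric space f(S, ℂ) of Schur ℂ-functions for S, equipped with the metric d_S(g, h) := sup{|g(s,t) − h(s,t)| : s, t ∈ S}, the set of coboundaries {δλ : λ ∈ Λ(S, ℂ)} is an open subset. -/
/-!
Let `h` be a Schur function within uniform distance `1` of a coboundary `g = δλ`. Then
`k := h · conj g` is again a Schur function, and `Re k > 0` everywhere. Arguments of complex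
numbers with positive real part add without wrapping around, so `θ := arg ∘ k` is an additive
real `2`-cocycle. On a finite group averaging `θ (s, ·)` over `S` gives `μ` with
`θ (r, s) = μ r + μ s - μ (r s)`, so `k = δ (exp (i μ))` and `h = k · g = δ (exp (i μ) · λ)`.
Hence the ball of radius `1` around every coboundary consists of coboundaries.
-/

/-- A Schur `ℂ`-function for a group `S`: a unit-circle-valued two-cocycle normalized
at the identity. -/
def IsSchur {S : Type*} [Group S] (g : S × S → ℂ) : Prop :=
  (∀ p, ‖g p‖ = 1) ∧ g (1, 1) = 1 ∧
    ∀ r s t : S, g (r, s) * g (r * s, t) = g (r, s * t) * g (s, t)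

/-- A coboundary `δλ` for `λ : S → ℂ` unit-circle-valued with `λ(1) = 1`. -/
def IsSchurCoboundary {S : Type*} [Group S] (g : S × S → ℂ) : Prop :=
  ∃ lam : S → ℂ, (∀ s, ‖lam s‖ = 1) ∧ lam 1 = 1 ∧
    ∀ p : S × S, g p = lam p.1 * lam p.2 * (starRingEnd ℂ) (lam (p.1 * p.2))

open Complex ComplexConjugate

theorem exists_eq_add_sub_of_additive_cocycle {S K : Type*} [Group S] [Fintype S] [Field K]
    [CharZero K] (θ : S × S → K)
    (hθ : ∀ r s t, θ (r, s) + θ (r * s, t) = θ (r, s * t) + θ (s, t)) :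
    ∃ μ : S → K, ∀ r s, θ (r, s) = μ r + μ s - μ (r * s) := by
  have hcard : (Fintype.card S : K) ≠ 0 := Nat.cast_ne_zero.mpr Fintype.card_ne_zero
  refine ⟨fun s => (∑ t, θ (s, t)) / Fintype.card S, fun r s => ?_⟩
  have hsum : Fintype.card S * θ (r, s) + ∑ t, θ (r * s, t) =
      ∑ t, θ (r, t) + ∑ t, θ (s, t) := by
    have := Finset.sum_congr rfl fun t (_ : t ∈ Finset.univ) => hθ r s t
    rwa [Finset.sum_add_distrib, Finset.sum_add_distrib, Finset.sum_const, Finset.card_univ,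
      nsmul_eq_mul,
      Fintype.sum_equiv (Equiv.mulLeft s) (fun t => θ (r, s * t)) (fun t => θ (r, t)) fun _ => rfl]
      at this
  field_simp
  linear_combination hsum

namespace Complex

theorem re_pos_of_norm_sub_one_lt {z : ℂ} (h : ‖z - 1‖ < 1) : 0 < z.re := by
  have h' := (abs_lt.mp ((abs_re_le_norm (z - 1)).trans_lt h)).1
  rw [sub_re, one_re] at h'
  linarith

theorem arg_mul_of_re_pos {x y : ℂ} (hx : 0 < x.re) (hy : 0 < y.re) :
    arg (x * y) = arg x + arg y := by
  have hx' := abs_lt.mp (abs_arg_lt_pi_div_two_iff.mpr (Or.inl hx))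
  have hy' := abs_lt.mp (abs_arg_lt_pi_div_two_iff.mpr (Or.inl hy))
  exact arg_mul (fun h => by simp [h] at hx) (fun h => by simp [h] at hy)
    ⟨by linarith, by linarith⟩

theorem exp_arg_mul_I_of_norm_eq_one {z : ℂ} (hz : ‖z‖ = 1) :
    exp (arg z * I) = z := by
  simpa [hz] using norm_mul_exp_arg_mul_I z

theorem norm_mul_conj_sub_one {z w : ℂ} (hw : ‖w‖ = 1) : ‖z * conj w - 1‖ = ‖z - w‖ := by
  have hw' : w * conj w = 1 := by simp [mul_conj', hw]
  rw [show z * conj w - 1 = (z - w) * conj w by linear_combination hw']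
  simp [hw]

end Complex

theorem IsSchur.mul_conj {S : Type*} [Group S] {g h : S × S → ℂ} (hh : IsSchur h)
    (hg : IsSchur g) : IsSchur fun p => h p * conj (g p) := by
  obtain ⟨hhn, hh1, hhc⟩ := hh
  obtain ⟨hgn, hg1, hgc⟩ := hg
  refine ⟨fun p => by simp [hhn, hgn], by simp [hh1, hg1], fun r s t => ?_⟩
  have hgc' := congrArg conj (hgc r s t)
  simp only [map_mul] at hgc'
  linear_combination (conj (g (r, s)) * conj (g (r * s, t))) * hhc r s t +
    (h (r, s * t) * h (s, t)) * hgc'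

theorem IsSchurCoboundary.mul {S : Type*} [Group S] {g h : S × S → ℂ}
    (hg : IsSchurCoboundary g) (hh : IsSchurCoboundary h) : IsSchurCoboundary (g * h) := by
  obtain ⟨lam, hlam_norm, hlam_one, hlam⟩ := hg
  obtain ⟨lam', hlam'_norm, hlam'_one, hlam'⟩ := hh
  refine ⟨lam * lam', fun s => by simp [hlam_norm, hlam'_norm], by simp [hlam_one, hlam'_one],
    fun p => ?_⟩
  simp only [Pi.mul_apply, hlam, hlam', map_mul]
  ring

theorem IsSchur.isSchurCoboundary_of_norm_sub_one_lt {S : Type*} [Group S] [Fintype S]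
    {k : S × S → ℂ} (hk : IsSchur k) (hclose : ∀ p, ‖k p - 1‖ < 1) :
    IsSchurCoboundary k := by
  obtain ⟨hnorm, hone, hcoc⟩ := hk
  have hre p : 0 < (k p).re := re_pos_of_norm_sub_one_lt (hclose p)
  obtain ⟨μ, hμ⟩ := exists_eq_add_sub_of_additive_cocycle (fun p => arg (k p)) fun r s t => by
    rw [← arg_mul_of_re_pos (hre _) (hre _), ← arg_mul_of_re_pos (hre _) (hre _), hcoc]
  have hμ_one : μ 1 = 0 := by simpa [hone] using (hμ 1 1).symm
  refine ⟨fun s => exp (μ s * I), fun s => norm_exp_ofReal_mul_I _, by simp [hμ_one],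
    fun ⟨r, s⟩ => ?_⟩
  rw [← exp_conj, ← exp_add, ← exp_add, ← exp_arg_mul_I_of_norm_eq_one (hnorm _), hμ]
  congr 1
  simp only [ofReal_sub, ofReal_add, map_mul, conj_ofReal, conj_I]
  ring

/-- For a finite group `S`, the set of coboundaries is open in the
metric space of Schur `ℂ`-functions for `S` (with the supremum metric, i.e. the
subspace metric of the finite product `S × S → ℂ`). -/
theorem stmt_13 {S : Type*} [Group S] [Fintype S] :
    IsOpen {g : {f : S × S → ℂ // IsSchur f} | IsSchurCoboundary g.1} := by
  refine Metric.isOpen_iff.mpr fun g hg => ⟨1, one_pos, fun h hh => ?_⟩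
  have hclose p : ‖h.1 p * conj (g.1 p) - 1‖ < 1 := by
    rw [norm_mul_conj_sub_one (g.2.1 p), ← dist_eq_norm]
    exact (dist_le_pi_dist h.1 g.1 p).trans_lt hh
  show IsSchurCoboundary h.1
  convert ((h.2.mul_conj g.2).isSchurCoboundary_of_norm_sub_one_lt hclose).mul hg using 1
  funext p
  simp [mul_assoc, conj_mul', g.2.1 p]
end

section
/- Let S be a finite group, Ω a totally disconnected compact Hausdorff space, and g a Schur C(Ω,ℂ)-function for S. Then there exists a map λ : S → C(Ω,ℂ) whose values are unitary elements of C(Ω,ℂ) with λ(1) = 1, such that for all s, t ∈ S the continuous function g(s,t)·λ(s)·λ(t)·(λ(st))* : Ω → ℂ has finite range. -/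
/-- A Schur `C(Ω, ℂ)`-function for a group `S`: a normalized two-cocycle with values
that are unitary elements of `C(Ω, ℂ)` (i.e. unit-circle valued functions). -/
def IsSchurFun {S : Type*} [Group S] {Ω : Type*} [TopologicalSpace Ω]
    (g : S → S → C(Ω, ℂ)) : Prop :=
  (∀ s t : S, ∀ ω, ‖g s t ω‖ = 1) ∧ g 1 1 = 1 ∧
    ∀ r s t : S, g r s * g (r * s) t = g r (s * t) * g s t

/-!
Put `n = |S|`. Multiplying the cocycle identity `g(s,t) g(st,u) = g(s,tu) g(t,u)` over all `u`
gives `g(s,t)^n = F(s) F(t) F(st)⁻¹` with `F(s) = ∏ᵤ g(s,u)`, so `n` kills the class of `g`.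
On a totally disconnected compact space every circle-valued `a` is an `n`-th power times a
finite-range function: approximate `a` by a finite-range `v` so closely that `a⁻¹ v` avoids `-1`,
and take a continuous principal `n`-th root of `a⁻¹ v`. Choosing `λ(s)` with `λ(s)^n F(s)` of
finite range (and `λ(1) = 1`), the `n`-th power of `g(s,t) λ(s) λ(t) λ(st)⁻¹` has finite range,
hence so does the function itself, since `z ↦ z^n` has finite fibres.
-/

open Complex Set

section Cocycle

variable {S G : Type*} [Group S] [CommGroup G]

theorem cocycle_one_left {g : S → S → G}
    (hcoc : ∀ r s t, g r s * g (r * s) t = g r (s * t) * g s t) (t : S) :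
    g 1 t = g 1 1 := by
  simpa using (hcoc 1 1 t).symm

theorem cocycle_pow_card_mul_prod [Fintype S] {g : S → S → G}
    (hcoc : ∀ r s t, g r s * g (r * s) t = g r (s * t) * g s t) (s t : S) :
    g s t ^ Fintype.card S * ∏ u, g (s * t) u = (∏ u, g s u) * ∏ u, g t u := by
  have := Finset.prod_congr (s₁ := Finset.univ) rfl fun u _ => hcoc s t u
  rwa [Finset.prod_mul_distrib, Finset.prod_mul_distrib, Finset.prod_const, Finset.card_univ,
    Fintype.prod_equiv (Equiv.mulLeft t) (fun u => g s (t * u)) (g s) fun _ => rfl] at this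

theorem exists_cohomologous_cocycle_mem [Fintype S] (H : Subgroup G)
    (hroot : ∀ a : G, ∃ b, b ^ Fintype.card S * a ∈ H)
    (hsat : ∀ b : G, b ^ Fintype.card S ∈ H → b ∈ H)
    {g : S → S → G} (hg : g 1 1 = 1)
    (hcoc : ∀ r s t, g r s * g (r * s) t = g r (s * t) * g s t) :
    ∃ lam : S → G, lam 1 = 1 ∧ ∀ s t, g s t * lam s * lam t * (lam (s * t))⁻¹ ∈ H := by
  classical
  set F : S → G := fun s => ∏ u, g s u
  have hF : F 1 = 1 := Finset.prod_eq_one fun t _ => (cocycle_one_left hcoc t).trans hg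
  choose b hb using fun s => hroot (F s)
  set lam : S → G := Function.update b 1 1
  have hlam : ∀ s, lam s ^ Fintype.card S * F s ∈ H := by
    intro s
    rcases eq_or_ne s 1 with rfl | hs
    · simp [lam, hF]
    · simpa [lam, hs] using hb s
  refine ⟨lam, by simp [lam], fun s t => hsat _ ?_⟩
  have key : (g s t * lam s * lam t * (lam (s * t))⁻¹) ^ Fintype.card S =
      (lam s ^ Fintype.card S * F s) * (lam t ^ Fintype.card S * F t) *
        (lam (s * t) ^ Fintype.card S * F (s * t))⁻¹ := by
    have hgn : g s t ^ Fintype.card S = F s * F t * (F (s * t))⁻¹ :=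
      eq_mul_inv_of_mul_eq (cocycle_pow_card_mul_prod hcoc s t)
    rw [mul_pow, mul_pow, mul_pow, inv_pow, hgn, mul_inv]
    ac_rfl
  rw [key]
  exact H.mul_mem (H.mul_mem (hlam s) (hlam t)) (H.inv_mem (hlam (s * t)))

end Cocycle

theorem Set.Finite.range_of_range_pow {X M : Type*} [Monoid M] {n : ℕ}
    (hfib : ∀ w : M, {x : M | x ^ n = w}.Finite) {f : X → M}
    (h : (range fun x => f x ^ n).Finite) : (range f).Finite :=
  (h.preimage' fun w _ => hfib w).subset <| range_subset_iff.2 fun x => mem_range_self x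

namespace Circle

theorem finite_setOf_pow_eq {n : ℕ} (hn : n ≠ 0) (w : Circle) :
    {x : Circle | x ^ n = w}.Finite := by
  classical
  have hC : {z : ℂ | z ^ n = w}.Finite := by
    rw [← Polynomial.nthRootsFinset_toSet (Nat.pos_of_ne_zero hn)]
    exact Finset.finite_toSet _
  exact (hC.preimage coe_injective.injOn).subset fun x (hx : x ^ n = w) =>
    congrArg ((↑) : Circle → ℂ) hx

noncomputable def nthRoot (n : ℕ) (z : Circle) : Circle := exp (arg z / n)

theorem nthRoot_pow {n : ℕ} (hn : n ≠ 0) (z : Circle) : nthRoot n z ^ n = z := by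
  rw [nthRoot, ← exp_nsmul, nsmul_eq_mul, mul_div_cancel₀ _ (Nat.cast_ne_zero.2 hn), exp_arg]

theorem continuousOn_nthRoot (n : ℕ) : ContinuousOn (nthRoot n) {z | (z : ℂ) ∈ slitPlane} :=
  fun _ hz => (exp.continuous.continuousAt.comp <|
    ((continuousAt_arg hz).comp continuous_subtype_val.continuousAt).div_const _).continuousWithinAt

end Circle

namespace ContinuousMap

def finiteRangeSubgroup (X G : Type*) [TopologicalSpace X] [TopologicalSpace G] [Group G]
    [IsTopologicalGroup G] : Subgroup C(X, G) where
  carrier := {f | (range f).Finite}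
  mul_mem' hf hg := (hf.image2 (· * ·) hg).subset <|
    range_subset_iff.2 fun x => mem_image2_of_mem (mem_range_self x) (mem_range_self x)
  one_mem' := (finite_singleton 1).subset (range_subset_iff.2 fun _ => rfl)
  inv_mem' hf := (hf.image (·⁻¹)).subset <|
    range_subset_iff.2 fun x => mem_image_of_mem _ (mem_range_self x)

theorem mem_finiteRangeSubgroup_of_pow_mem {X : Type*} [TopologicalSpace X] {n : ℕ} (hn : n ≠ 0)
    {b : C(X, Circle)} (hb : b ^ n ∈ finiteRangeSubgroup X Circle) :
    b ∈ finiteRangeSubgroup X Circle :=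
  Set.Finite.range_of_range_pow (Circle.finite_setOf_pow_eq hn) hb

theorem exists_pow_mul_mem_finiteRangeSubgroup {Ω : Type*} [TopologicalSpace Ω]
    [CompactSpace Ω] [T2Space Ω] [TotallyDisconnectedSpace Ω] {n : ℕ} (hn : n ≠ 0)
    (a : C(Ω, Circle)) : ∃ b : C(Ω, Circle), b ^ n * a ∈ finiteRangeSubgroup Ω Circle := by
  set V : Set (Circle × Circle) := {p | ((p.1⁻¹ * p.2 : Circle) : ℂ) ∈ slitPlane}
  have hV : V ∈ nhdsSet (diagonal Circle) := by
    refine (isOpen_slitPlane.preimage (by fun_prop)).mem_nhdsSet.2 ?_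
    rintro ⟨x, y⟩ (rfl : x = y)
    simp [one_mem_slitPlane]
  obtain ⟨k, c, v, hc, hcv⟩ := a.exists_finite_approximation_of_mem_nhds_diagonal hV
  refine ⟨⟨fun ω => Circle.nthRoot n ((a ω)⁻¹ * v (c ω)), ?_⟩, ?_⟩
  · exact (Circle.continuousOn_nthRoot n).comp_continuous (by fun_prop) hcv
  · refine (finite_range v).subset (range_subset_iff.2 fun ω => ⟨c ω, ?_⟩)
    simp [Circle.nthRoot_pow hn]

noncomputable def toCircle {X : Type*} [TopologicalSpace X] (f : C(X, ℂ))
    (hf : ∀ x, ‖f x‖ = 1) : C(X, Circle) :=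
  ⟨fun x => ⟨f x, mem_sphere_zero_iff_norm.2 (hf x)⟩, f.continuous.subtype_mk _⟩

@[simp]
theorem coe_toCircle_apply {X : Type*} [TopologicalSpace X] (f : C(X, ℂ))
    (hf : ∀ x, ‖f x‖ = 1) (x : X) : (f.toCircle hf x : ℂ) = f x := rfl

end ContinuousMap

/-- Let `S` be a finite group, `Ω` a totally disconnected compact
Hausdorff space, and `g` a Schur `C(Ω, ℂ)`-function for `S`.  Then there is
`λ : S → C(Ω, ℂ)` with unitary values and `λ(1) = 1` such that each function
`g(s,t)·λ(s)·λ(t)·(λ(st))* : Ω → ℂ` has finite range. -/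
theorem stmt_17 {S : Type*} [Group S] [Fintype S]
    {Ω : Type*} [TopologicalSpace Ω] [CompactSpace Ω] [T2Space Ω]
    [TotallyDisconnectedSpace Ω]
    (g : S → S → C(Ω, ℂ)) (hg : IsSchurFun g) :
    ∃ lam : S → C(Ω, ℂ), (∀ s : S, ∀ ω, ‖lam s ω‖ = 1) ∧ lam 1 = 1 ∧
      ∀ s t : S,
        (Set.range fun ω => g s t ω * lam s ω * lam t ω *
          (starRingEnd ℂ) (lam (s * t) ω)).Finite := by
  obtain ⟨hnorm, hone, hcoc⟩ := hg
  set u : S → S → C(Ω, Circle) := fun s t => (g s t).toCircle (hnorm s t)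
  have hu_one : u 1 1 = 1 := by ext ω; simp [u, hone]
  have hu_coc : ∀ r s t, u r s * u (r * s) t = u r (s * t) * u s t := by
    intro r s t; ext ω; simpa [u] using congr($(hcoc r s t) ω)
  have hn : Fintype.card S ≠ 0 := Fintype.card_ne_zero
  obtain ⟨lam, hlam_one, hlam⟩ := exists_cohomologous_cocycle_mem
    (ContinuousMap.finiteRangeSubgroup Ω Circle)
    (fun a => a.exists_pow_mul_mem_finiteRangeSubgroup hn)
    (fun _ => ContinuousMap.mem_finiteRangeSubgroup_of_pow_mem hn) hu_one hu_coc
  refine ⟨fun s => ⟨fun ω => lam s ω, continuous_subtype_val.comp (lam s).continuous⟩,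
    fun s ω => Circle.norm_coe _, by ext ω; simp [hlam_one], fun s t => ?_⟩
  refine ((hlam s t).image ((↑) : Circle → ℂ)).subset <|
    range_subset_iff.2 fun ω => ⟨_, mem_range_self ω, ?_⟩
  simp [u, ← Circle.coe_inv_eq_conj]
end

section
/- Let Ω be a locally compact Hausdorff space, Ω* = Ω ∪ {∞} its Alexandroff (one-point) compactification, and (ϑ_s)_{s ∈ (0,1]} a family of proper continuous maps Ω → Ω; for each s let ϑ_s* : Ω* → Ω* denote the continuous extension of ϑ_s with ϑ_s*(∞) = ∞. Assume: (1) the map Ω* × (0,1] → Ω*, (ω, s) ↦ ϑ_s*(ω), is continuous; (2) ϑ₁(ω) = ω for every ω ∈ Ω; (3) for every compact set Γ ⊆ Ω there is ε ∈ (0,1] such that Γ ∩ ϑ_s(Ω) = ∅ for all s ∈ (0, ε). For s ∈ (0,1] define φ_s : C₀(Ω, ℂ) → C₀(Ω, ℂ) by φ_s(x) = x ∘ ϑ_s, and set φ₀ := 0. Then each φ_s with s ∈ (0,1] is a well-defined *-homomorphism of C₀(Ω, ℂ), φ₁ is the identity map, and for every x ∈ C₀(Ω, ℂ) the map [0,1]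 → C₀(Ω, ℂ), s ↦ φ_s(x), is continuous; in particular the identity of C₀(Ω, ℂ) is connected to the zero endomorphism through a pointwise norm-continuous path of *-homomorphisms. -/
/-- The extension of a self-map of `Ω` to the one-point (Alexandroff)
compactification, sending the point at infinity to itself. -/
def onePointExtend {Ω : Type*} (f : Ω → Ω) : OnePoint Ω → OnePoint Ω :=
  Option.map f

/-! The path `s ↦ x ∘ ϑ_s` extends continuously to `s = 0` because the ranges of `ϑ_s`
eventually leave every compact set, outside of which `x` is small. Continuity for `s > 0`
is uniform continuity on the compact space `Ω*`: extending `x` by `0` at `∞` embeds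
`C₀(Ω, ℂ)` isometrically into `C(Ω*, ℂ)`, where `s ↦ x* ∘ ϑ_s*` is continuous as the curried
form of the jointly continuous map `(0,1] × Ω* → ℂ`. -/

open Set Filter Topology ZeroAtInfty OnePoint

theorem continuousOn_Icc_of_continuousOn_Ioc {α β : Type*} [TopologicalSpace α] [LinearOrder α]
    [OrderTopology α] [TopologicalSpace β] {f : α → β} {a b : α} (hab : a ≤ b)
    (hf : ContinuousOn f (Ioc a b)) (ha : ContinuousWithinAt f (Ioc a b) a) :
    ContinuousOn f (Icc a b) := by
  intro x hx
  rcases hx.1.eq_or_lt with rfl | hax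
  · rwa [← Ioc_insert_left hab, continuousWithinAt_insert_self]
  · refine (hf x ⟨hax, hx.2⟩).mono_of_mem_nhdsWithin ?_
    filter_upwards [self_mem_nhdsWithin, nhdsWithin_le_nhds (Ioi_mem_nhds hax)] with y hy hay
    exact ⟨hay, hy.2⟩

def IsProperMap.toCocompactMap {X Y : Type*} [TopologicalSpace X] [TopologicalSpace Y]
    {f : X → Y} (hf : IsProperMap f) : CocompactMap X Y :=
  ⟨⟨f, hf.continuous⟩,
    CocompactMap.tendsto_of_forall_preimage fun _ hK ↦ hf.isCompact_preimage hK⟩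

@[simp]
theorem IsProperMap.coe_toCocompactMap {X Y : Type*} [TopologicalSpace X] [TopologicalSpace Y]
    {f : X → Y} (hf : IsProperMap f) : ⇑hf.toCocompactMap = f :=
  rfl

namespace ZeroAtInftyContinuousMap

section Comp

variable {β γ δ R : Type*} [TopologicalSpace β] [TopologicalSpace γ] [TopologicalSpace δ]
  [Semiring R] [NonUnitalNonAssocSemiring δ] [IsTopologicalSemiring δ] [StarAddMonoid δ]
  [ContinuousStar δ] [Module R δ] [ContinuousConstSMul R δ]

def compNonUnitalStarAlgHom (g : CocompactMap β γ) : C₀(γ, δ) →⋆ₙₐ[R] C₀(β, δ) :=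
  { compNonUnitalAlgHom g with map_star' := fun _ ↦ rfl }

@[simp]
theorem compNonUnitalStarAlgHom_apply (g : CocompactMap β γ) (f : C₀(γ, δ)) :
    compNonUnitalStarAlgHom (R := R) g f = f.comp g :=
  rfl

end Comp

section OnePoint

variable {Ω E : Type*} [TopologicalSpace Ω] [R1Space Ω] [PseudoMetricSpace E] [Zero E]

def toOnePoint (x : C₀(Ω, E)) : C(OnePoint Ω, E) :=
  OnePoint.continuousMapMk x 0 <| by
    rw [coclosedCompact_eq_cocompact]
    exact zero_at_infty x

@[simp]
theorem toOnePoint_infty (x : C₀(Ω, E)) : x.toOnePoint ∞ = 0 :=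
  rfl

theorem isometry_toOnePoint : Isometry (toOnePoint : C₀(Ω, E) → C(OnePoint Ω, E)) := by
  refine Isometry.of_dist_eq fun x y ↦ le_antisymm ?_ ?_
  · refine (ContinuousMap.dist_le dist_nonneg).2 fun p ↦ ?_
    induction p using OnePoint.rec with
    | infty => simp
    | coe ω =>
      rw [← dist_toBCF_eq_dist]
      exact BoundedContinuousFunction.dist_coe_le_dist (f := x.toBCF) (g := y.toBCF) ω
  · rw [← dist_toBCF_eq_dist]
    refine (BoundedContinuousFunction.dist_le dist_nonneg).2 fun ω ↦ ?_
    exact x.toOnePoint.dist_apply_le_dist (g := y.toOnePoint) (ω : OnePoint Ω)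

theorem continuous_comp_of_continuous_onePointExtend {T : Type*} [TopologicalSpace T]
    (x : C₀(Ω, E)) {f : T → CocompactMap Ω Ω}
    (hf : Continuous fun q : OnePoint Ω × T ↦ onePointExtend (f q.2) q.1) :
    Continuous fun t ↦ x.comp (f t) := by
  let F : C(T × OnePoint Ω, E) :=
    x.toOnePoint.comp ⟨fun q ↦ onePointExtend (f q.1) q.2, hf.comp continuous_swap⟩
  refine isometry_toOnePoint.isUniformInducing.isInducing.continuous_iff.2
    (F.curry.continuous.congr fun t ↦ ?_)
  ext p
  induction p using OnePoint.rec <;> rfl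

end OnePoint

theorem tendsto_comp_nhds_zero {Ω Ω' E T : Type*} [TopologicalSpace Ω] [TopologicalSpace Ω']
    [NormedAddCommGroup E] {l : Filter T} (x : C₀(Ω, E)) {f : T → CocompactMap Ω' Ω}
    (hf : ∀ K, IsCompact K → ∀ᶠ t in l, Disjoint K (range (f t))) :
    Tendsto (fun t ↦ x.comp (f t)) l (𝓝 0) := by
  refine NormedAddGroup.tendsto_nhds_zero.2 fun ε hε ↦ ?_
  obtain ⟨K, hK, hxK⟩ :=
    mem_cocompact.1 (zero_at_infty x (Metric.ball_mem_nhds 0 (half_pos hε)))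
  filter_upwards [hf K hK] with t hKt
  have hsmall : ∀ ω, ‖x (f t ω)‖ < ε / 2 := fun ω ↦ by
    simpa using hxK (disjoint_right.1 hKt (mem_range_self ω))
  calc ‖x.comp (f t)‖ ≤ ε / 2 := by
        rw [← norm_toBCF_eq_norm]
        exact (BoundedContinuousFunction.norm_le (half_pos hε).le).2 fun ω ↦ (hsmall ω).le
    _ < ε := half_lt_self hε

end ZeroAtInftyContinuousMap

theorem stmt_19_general {Ω : Type*} [TopologicalSpace Ω] [T2Space Ω]
    (ϑ : ℝ → Ω → Ω)
    (hproper : ∀ s ∈ Set.Ioc (0 : ℝ) 1, IsProperMap (ϑ s))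
    (hcont : Continuous fun q : OnePoint Ω × (Set.Ioc (0 : ℝ) 1) =>
      onePointExtend (ϑ q.2) q.1)
    (hone : ∀ ω : Ω, ϑ 1 ω = ω)
    (hmiss : ∀ Γ : Set Ω, IsCompact Γ →
      ∃ ε ∈ Set.Ioc (0 : ℝ) 1, ∀ s ∈ Set.Ioo (0 : ℝ) ε, Γ ∩ Set.range (ϑ s) = ∅) :
    ∃ Φ : ℝ → ZeroAtInftyContinuousMap Ω ℂ → ZeroAtInftyContinuousMap Ω ℂ,
      (∀ s ∈ Set.Ioc (0 : ℝ) 1, ∀ x, ∀ ω, Φ s x ω = x (ϑ s ω)) ∧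
      (∀ x, Φ 0 x = 0) ∧
      (∀ s ∈ Set.Ioc (0 : ℝ) 1, ∀ x y, Φ s (x + y) = Φ s x + Φ s y) ∧
      (∀ s ∈ Set.Ioc (0 : ℝ) 1, ∀ x y, Φ s (x * y) = Φ s x * Φ s y) ∧
      (∀ s ∈ Set.Ioc (0 : ℝ) 1, ∀ x, Φ s (star x) = star (Φ s x)) ∧
      (∀ s ∈ Set.Ioc (0 : ℝ) 1, ∀ (c : ℂ) (x), Φ s (c • x) = c • Φ s x) ∧
      (∀ x, Φ 1 x = x) ∧
      (∀ x, ContinuousOn (fun s => Φ s x) (Set.Icc 0 1)) := by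
  let θ (s : ℝ) : CocompactMap Ω Ω :=
    if h : s ∈ Ioc 0 1 then (hproper s h).toCocompactMap else CocompactMap.id Ω
  have hθ : ∀ s ∈ Ioc (0 : ℝ) 1, ⇑(θ s) = ϑ s := fun s hs ↦ by
    simp only [θ, dif_pos hs, IsProperMap.coe_toCocompactMap]
  let φ (s : ℝ) : C₀(Ω, ℂ) →⋆ₙₐ[ℂ] C₀(Ω, ℂ) :=
    if s ∈ Ioc 0 1 then ZeroAtInftyContinuousMap.compNonUnitalStarAlgHom (θ s) else 0
  have hφ : ∀ s ∈ Ioc (0 : ℝ) 1, ∀ x, φ s x = x.comp (θ s) := fun s hs x ↦ by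
    simp only [φ, if_pos hs, ZeroAtInftyContinuousMap.compNonUnitalStarAlgHom_apply]
  have hφ0 : ∀ x, φ 0 x = 0 := fun x ↦ by simp [φ]
  have hθ_leave :
      ∀ K, IsCompact K → ∀ᶠ s in 𝓝[Ioc 0 1] (0 : ℝ), Disjoint K (range (θ s)) := by
    intro K hK
    obtain ⟨ε, hε, hKε⟩ := hmiss K hK
    filter_upwards [inter_mem_nhdsWithin (Ioc 0 1) (Iio_mem_nhds hε.1)] with s ⟨hs, hsε⟩
    rw [hθ s hs, disjoint_iff_inter_eq_empty]
    exact hKε s ⟨hs.1, hsε⟩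
  have hθ_cont :
      Continuous fun q : OnePoint Ω × Ioc (0 : ℝ) 1 ↦ onePointExtend (θ q.2) q.1 := by
    simpa only [hθ _ (Subtype.prop _)] using hcont
  refine ⟨fun s ↦ φ s, fun s hs x ω ↦ by simp [hφ s hs, hθ s hs], hφ0,
    fun s _ ↦ map_add (φ s), fun s _ ↦ map_mul (φ s), fun s _ ↦ map_star (φ s),
    fun s _ ↦ map_smul (φ s), fun x ↦ ?_, fun x ↦ ?_⟩
  · ext ω
    simp [hφ 1 ⟨one_pos, le_rfl⟩, hθ 1 ⟨one_pos, le_rfl⟩, hone]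
  refine continuousOn_Icc_of_continuousOn_Ioc zero_le_one ?_ ?_
  · rw [continuousOn_iff_continuous_domRestrict]
    convert x.continuous_comp_of_continuous_onePointExtend (f := fun s : Ioc (0 : ℝ) 1 ↦ θ s)
      hθ_cont with s
    exact hφ s s.2 x
  · simp only [ContinuousWithinAt, hφ0]
    exact (x.tendsto_comp_nhds_zero hθ_leave).congr' <|
      eventually_nhdsWithin_of_forall fun s hs ↦ (hφ s hs x).symm

/-- Let `Ω` be a locally compact Hausdorff space and
`(ϑ_s)_{s ∈ (0,1]}` a family of proper continuous self-maps of `Ω` such that the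
jointly extended map `Ω* × (0,1] → Ω*` is continuous, `ϑ₁ = id`, and every compact
set is eventually missed by the ranges `ϑ_s(Ω)` as `s → 0`.  Then the maps
`φ_s : x ↦ x ∘ ϑ_s` (for `s ∈ (0,1]`) together with `φ₀ := 0` form a well-defined
pointwise norm-continuous path of *-homomorphisms of `C₀(Ω, ℂ)` from the identity
(`φ₁ = id`) to the zero endomorphism. -/
theorem stmt_19 {Ω : Type*} [TopologicalSpace Ω] [LocallyCompactSpace Ω] [T2Space Ω]
    (ϑ : ℝ → Ω → Ω)
    (hproper : ∀ s ∈ Set.Ioc (0 : ℝ) 1, IsProperMap (ϑ s))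
    (hcont : Continuous fun q : OnePoint Ω × (Set.Ioc (0 : ℝ) 1) =>
      onePointExtend (ϑ q.2) q.1)
    (hone : ∀ ω : Ω, ϑ 1 ω = ω)
    (hmiss : ∀ Γ : Set Ω, IsCompact Γ →
      ∃ ε ∈ Set.Ioc (0 : ℝ) 1, ∀ s ∈ Set.Ioo (0 : ℝ) ε, Γ ∩ Set.range (ϑ s) = ∅) :
    ∃ Φ : ℝ → ZeroAtInftyContinuousMap Ω ℂ → ZeroAtInftyContinuousMap Ω ℂ,
      (∀ s ∈ Set.Ioc (0 : ℝ) 1, ∀ x, ∀ ω, Φ s x ω = x (ϑ s ω)) ∧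
      (∀ x, Φ 0 x = 0) ∧
      (∀ s ∈ Set.Ioc (0 : ℝ) 1, ∀ x y, Φ s (x + y) = Φ s x + Φ s y) ∧
      (∀ s ∈ Set.Ioc (0 : ℝ) 1, ∀ x y, Φ s (x * y) = Φ s x * Φ s y) ∧
      (∀ s ∈ Set.Ioc (0 : ℝ) 1, ∀ x, Φ s (star x) = star (Φ s x)) ∧
      (∀ s ∈ Set.Ioc (0 : ℝ) 1, ∀ (c : ℂ) (x), Φ s (c • x) = c • Φ s x) ∧
      (∀ x, Φ 1 x = x) ∧
      (∀ x, ContinuousOn (fun s => Φ s x) (Set.Icc 0 1)) :=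
  stmt_19_general ϑ hproper hcont hone hmiss
end
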